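/- arXiv:1907.06294 — 5 statements merged into one kernel-verified Lean document; each statement's English description precedes it below -/
import Mathlib

section
/- Let 1 ≤ p < ∞, 0 < T < R, N ≥ 1 an integer, and suppose f : ℝ^N → ℝ^N is C^1. Then the family of maps W^{1,p}([−R,0],ℝ^N) ∋ φ ↦ B_{φ,r} ∈ W^{1,p}([−R,T],ℝ^N), indexed by r ∈ [T,R], is pointwise equicontinuous: for every φ_0 ∈ W^{1,p}([−R,0],ℝ^N) and ε > 0 there is δ > 0 such that ‖φ − φ_0‖_{W^{1,p}[−R,0]} < δ implies ‖B_{φ,r} − B_{φ_0,r}‖_{W^{1,p}[−R,T]} < ε for every r ∈ [T,R]. -/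
/-!
`B_{φ,r}` vanishes on `[-R,0]` and its derivative on `(0,T]` is `-(f∘φ)'(· - r)`, which only
samples `[-R,0]`. Hence, uniformly in `r`, `‖B_{φ,r} - B_{φ0,r}‖` is bounded by the `L^p` distance
of `(f∘φ)' = Df(φ) φ'` and `(f∘φ0)'` on `[-R,0]`, and it suffices to show that `φ ↦ Df(φ) φ'` is
continuous from `W^{1,p}` to `L^p`. By Hölder, `W^{1,p}` embeds continuously into `C`, so a `φ`
close to `φ0` stays uniformly close to the compact curve `φ0([-R,0])`, near which `Df` is bounded
by `M` and uniformly continuous; then `|Df(φ) φ' - Df(φ0) φ0'| ≤ M |φ' - φ0'| + ω |φ0'|`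
pointwise, with `ω` as small as we like.
-/

open MeasureTheory Set ENNReal

noncomputable section

/-- `ℝ^N` with a fixed norm (the Euclidean one). -/
abbrev Vec (N : ℕ) : Type := EuclideanSpace ℝ (Fin N)

/-- `x ∈ W^{1,p}([a,b],ℝ^N)`: `x` is absolutely continuous on `[a,b]` (equivalently, it is the
integral of its almost-everywhere derivative `x'`), and `x' ∈ L^p([a,b],ℝ^N)`. -/
def HasW1pOn {N : ℕ} (x x' : ℝ → Vec N) (p a b : ℝ) : Prop :=
  (∀ t ∈ Set.Icc a b, x t = x a + ∫ s in a..t, x' s) ∧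
    IntervalIntegrable x' volume a b ∧
    MemLp x' (ENNReal.ofReal p) (volume.restrict (Set.Icc a b))

/-- The `W^{1,p}[a,b]`-norm, computed from the value `v = x a` at the left endpoint and the
almost-everywhere derivative `d = x'`:  `(|x(a)|^p + ∫_a^b |x'|^p)^(1/p)`. -/
def wNorm {N : ℕ} (p a b : ℝ) (v : Vec N) (d : ℝ → Vec N) : ℝ :=
  (‖v‖ ^ p + ∫ t in a..b, ‖d t‖ ^ p) ^ (1 / p)

/-- The supremum norm `‖x‖_{C[a,b]}`. -/
def cNorm {N : ℕ} (a b : ℝ) (x : ℝ → Vec N) : ℝ :=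
  sSup ((fun t => ‖x t‖) '' Set.Icc a b)

/-- The almost-everywhere derivative of `f ∘ φ`, namely `θ ↦ Df(φ(θ)) φ'(θ)`. -/
def gder {N : ℕ} (f : Vec N → Vec N) (φ φ' : ℝ → Vec N) : ℝ → Vec N :=
  fun θ => fderiv ℝ f (φ θ) (φ' θ)

/-- The solution `x(·;φ,r)` of `ẋ(t) = f(x(t−r))` on `[−R,T]`, for delay `r ∈ [T,R]`:
`x(t;φ,r) = φ(t)` for `t ≤ 0` and `x(t;φ,r) = φ(0) + ∫_0^t f(φ(s−r)) ds` for `t ≥ 0`. -/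
def solX {N : ℕ} (f : Vec N → Vec N) (φ : ℝ → Vec N) (r : ℝ) : ℝ → Vec N :=
  fun t => if t ≤ 0 then φ t else φ 0 + ∫ s in (0:ℝ)..t, f (φ (s - r))

/-- The almost-everywhere derivative of `x(·;φ,r)`. -/
def solX' {N : ℕ} (f : Vec N → Vec N) (φ φ' : ℝ → Vec N) (r : ℝ) : ℝ → Vec N :=
  fun t => if t ≤ 0 then φ' t else f (φ (t - r))

/-- `B_{φ,r}(t) = 0` for `t ∈ [−R,0]`, `B_{φ,r}(t) = −∫_0^t (f∘φ)'(s−r) ds` for `t ∈ [0,T]`. -/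
def Bfun {N : ℕ} (f : Vec N → Vec N) (φ φ' : ℝ → Vec N) (r : ℝ) : ℝ → Vec N :=
  fun t => if t ≤ 0 then 0 else -∫ s in (0:ℝ)..t, gder f φ φ' (s - r)

/-- The almost-everywhere derivative of `B_{φ,r}`. -/
def Bfun' {N : ℕ} (f : Vec N → Vec N) (φ φ' : ℝ → Vec N) (r : ℝ) : ℝ → Vec N :=
  fun t => if t ≤ 0 then 0 else -gder f φ φ' (t - r)

open Filter Topology

lemma Real.rpow_add_le_mul_rpow_add_rpow {p a b : ℝ} (ha : 0 ≤ a) (hb : 0 ≤ b) (hp : 1 ≤ p) :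
    (a + b) ^ p ≤ 2 ^ (p - 1) * (a ^ p + b ^ p) := by
  lift a to NNReal using ha
  lift b to NNReal using hb
  exact_mod_cast NNReal.rpow_add_le_mul_rpow_add_rpow a b hp

lemma tendsto_const_mul_rpow_nhds_zero {p : ℝ} (hp : 0 < p) (c : ℝ) :
    Tendsto (fun w : ℝ => c * w ^ p) (𝓝 0) (𝓝 0) := by
  have h := ((continuousAt_id.rpow_const (Or.inr hp.le)).const_mul c).tendsto (x := 0)
  rwa [id, Real.zero_rpow hp.ne', mul_zero] at h

lemma IsCompact.exists_forall_dist_lt {α β : Type*} [PseudoMetricSpace α] [PseudoMetricSpace β]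
    {K : Set α} (hK : IsCompact K) {g : α → β} (hg : ∀ z ∈ K, ContinuousAt g z) {ω : ℝ}
    (hω : 0 < ω) : ∃ s > 0, ∀ z ∈ K, ∀ w, dist z w < s → dist (g z) (g w) < ω := by
  obtain ⟨s, hs, hsub⟩ := Metric.mem_uniformity_dist.1
    (hK.uniformContinuousAt_of_continuousAt g hg (Metric.dist_mem_uniformity hω))
  exact ⟨s, hs, fun z hz w hzw => hsub hzw hz⟩

lemma ContinuousLinearMap.norm_apply_sub_apply_le {𝕜 E F : Type*} [NontriviallyNormedField 𝕜]
    [SeminormedAddCommGroup E] [NormedSpace 𝕜 E] [SeminormedAddCommGroup F] [NormedSpace 𝕜 F]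
    (A B : E →L[𝕜] F) (x y : E) : ‖A x - B y‖ ≤ ‖A‖ * ‖x - y‖ + ‖A - B‖ * ‖y‖ := by
  calc ‖A x - B y‖ = ‖A (x - y) + (A - B) y‖ := by
        rw [map_sub, sub_apply, sub_add_sub_cancel]
    _ ≤ ‖A‖ * ‖x - y‖ + ‖A - B‖ * ‖y‖ :=
        (norm_add_le _ _).trans (add_le_add (A.le_opNorm _) ((A - B).le_opNorm _))

section IntervalLp

variable {E : Type*} [NormedAddCommGroup E] {x : ℝ → E} {p a b : ℝ}

lemma MeasureTheory.MemLp.intervalIntegrable_norm_rpow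
    (hx : MemLp x (ENNReal.ofReal p) (volume.restrict (Icc a b))) (hp : 0 < p) (hab : a ≤ b) :
    IntervalIntegrable (fun t => ‖x t‖ ^ p) volume a b := by
  have h := hx.integrable_norm_rpow (by simpa using hp) ENNReal.ofReal_ne_top
  rw [ENNReal.toReal_ofReal hp.le] at h
  exact (intervalIntegrable_iff_integrableOn_Icc_of_le hab).2 h

lemma intervalIntegral_norm_le_rpow_mul
    (hx : MemLp x (ENNReal.ofReal p) (volume.restrict (Icc a b))) (hp : 1 ≤ p) (hab : a ≤ b) :
    ∫ t in a..b, ‖x t‖ ≤ (b - a) ^ (1 - 1 / p) * (∫ t in a..b, ‖x t‖ ^ p) ^ (1 / p) := by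
  rcases hp.eq_or_lt with rfl | hp
  · simp
  have hx' : MemLp x (ENNReal.ofReal p) (volume.restrict (Ioc a b)) :=
    hx.mono_measure (Measure.restrict_mono Ioc_subset_Icc_self le_rfl)
  have hpq := Real.HolderConjugate.conjExponent hp
  have h := integral_mul_norm_le_Lp_mul_Lq hpq hx'.norm (memLp_const (1 : ℝ))
  simp only [norm_norm, norm_one, mul_one, Real.one_rpow, integral_const, smul_eq_mul] at h
  rw [intervalIntegral.integral_of_le hab, intervalIntegral.integral_of_le hab, mul_comm]
  convert h using 2
  rw [measureReal_restrict_apply_univ, Real.volume_real_Ioc_of_le hab, one_div, one_div,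
    hpq.one_sub_inv]

end IntervalLp

section WNorm

variable {N : ℕ} {p a b : ℝ} {v : Vec N} {d : ℝ → Vec N}

lemma integral_norm_rpow_nonneg (hab : a ≤ b) : 0 ≤ ∫ t in a..b, ‖d t‖ ^ p :=
  intervalIntegral.integral_nonneg hab fun t _ => by positivity

lemma wNorm_nonneg (hab : a ≤ b) : 0 ≤ wNorm p a b v d :=
  Real.rpow_nonneg (add_nonneg (by positivity) (integral_norm_rpow_nonneg hab)) _

lemma wNorm_zero_left (hp : p ≠ 0) (d : ℝ → Vec N) :
    wNorm p a b 0 d = (∫ t in a..b, ‖d t‖ ^ p) ^ (1 / p) := by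
  rw [wNorm, norm_zero, Real.zero_rpow hp, zero_add]

lemma wNorm_rpow (hp : 0 < p) (hab : a ≤ b) :
    wNorm p a b v d ^ p = ‖v‖ ^ p + ∫ t in a..b, ‖d t‖ ^ p := by
  rw [wNorm, one_div,
    Real.rpow_inv_rpow (add_nonneg (by positivity) (integral_norm_rpow_nonneg hab)) hp.ne']

lemma norm_le_wNorm (hp : 0 < p) (hab : a ≤ b) : ‖v‖ ≤ wNorm p a b v d := by
  rw [← Real.rpow_le_rpow_iff (norm_nonneg v) (wNorm_nonneg hab) hp, wNorm_rpow hp hab]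
  exact le_add_of_nonneg_right (integral_norm_rpow_nonneg hab)

lemma integral_norm_rpow_le_wNorm_rpow (hp : 0 < p) (hab : a ≤ b) :
    ∫ t in a..b, ‖d t‖ ^ p ≤ wNorm p a b v d ^ p := by
  rw [wNorm_rpow hp hab]
  exact le_add_of_nonneg_left (by positivity)

lemma rpow_integral_norm_rpow_le_wNorm (hp : 0 < p) (hab : a ≤ b) :
    (∫ t in a..b, ‖d t‖ ^ p) ^ (1 / p) ≤ wNorm p a b v d :=
  Real.rpow_le_rpow (integral_norm_rpow_nonneg hab) (le_add_of_nonneg_left (by positivity))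
    (by positivity)

end WNorm

namespace HasW1pOn

variable {N : ℕ} {f : Vec N → Vec N} {x x' y y' : ℝ → Vec N} {p a b : ℝ}

lemma sub (hx : HasW1pOn x x' p a b) (hy : HasW1pOn y y' p a b) :
    HasW1pOn (x - y) (x' - y') p a b := by
  refine ⟨fun t ht => ?_, hx.2.1.sub hy.2.1, hx.2.2.sub hy.2.2⟩
  have hsub : uIcc a t ⊆ uIcc a b := uIcc_subset_uIcc_left (Icc_subset_uIcc ht)
  simp only [Pi.sub_apply]
  rw [hx.1 t ht, hy.1 t ht,
    intervalIntegral.integral_sub (hx.2.1.mono_set hsub) (hy.2.1.mono_set hsub)]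
  abel

lemma continuousOn (hx : HasW1pOn x x' p a b) : ContinuousOn x (Icc a b) :=
  ((continuousOn_const.add (intervalIntegral.continuousOn_primitive_interval' hx.2.1
    left_mem_uIcc)).mono Icc_subset_uIcc).congr hx.1

lemma norm_le_mul_wNorm (hx : HasW1pOn x x' p a b) (hp : 1 ≤ p) {t : ℝ} (ht : t ∈ Icc a b) :
    ‖x t‖ ≤ (1 + (b - a) ^ (1 - 1 / p)) * wNorm p a b (x a) x' := by
  have hab : a ≤ b := ht.1.trans ht.2
  have hp0 : 0 < p := by linarith
  calc ‖x t‖ ≤ ‖x a‖ + ∫ s in a..t, ‖x' s‖ := by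
        rw [hx.1 t ht]
        exact (norm_add_le _ _).trans
          (add_le_add_right (intervalIntegral.norm_integral_le_integral_norm ht.1) _)
    _ ≤ ‖x a‖ + ∫ s in a..b, ‖x' s‖ := by
        gcongr
        exact intervalIntegral.integral_mono_interval le_rfl ht.1 ht.2
          (.of_forall fun _ => norm_nonneg _) hx.2.1.norm
    _ ≤ ‖x a‖ + (b - a) ^ (1 - 1 / p) * (∫ s in a..b, ‖x' s‖ ^ p) ^ (1 / p) := by
        gcongr
        exact intervalIntegral_norm_le_rpow_mul hx.2.2 hp hab
    _ ≤ wNorm p a b (x a) x' + (b - a) ^ (1 - 1 / p) * wNorm p a b (x a) x' := by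
        gcongr
        · exact norm_le_wNorm hp0 hab
        · exact rpow_integral_norm_rpow_le_wNorm hp0 hab
    _ = (1 + (b - a) ^ (1 - 1 / p)) * wNorm p a b (x a) x' := by ring


lemma memLp_gder (hx : HasW1pOn x x' p a b) (hf : ContDiff ℝ 1 f) :
    MemLp (gder f x x') (ENNReal.ofReal p) (volume.restrict (Icc a b)) := by
  have hDf := hf.continuous_fderiv one_ne_zero
  obtain ⟨M, hM⟩ :=
    (isCompact_Icc.image_of_continuousOn hx.continuousOn).exists_bound_of_continuousOn
      hDf.continuousOn
  have hDfx : AEStronglyMeasurable (fun t => fderiv ℝ f (x t)) (volume.restrict (Icc a b)) :=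
    (hDf.comp_continuousOn hx.continuousOn).aestronglyMeasurable measurableSet_Icc
  refine hx.2.2.of_le_mul (c := M)
    ((ContinuousLinearMap.apply ℝ (Vec N)).aestronglyMeasurable_comp₂ hx.2.2.1 hDfx) ?_
  filter_upwards [ae_restrict_mem measurableSet_Icc] with t ht
  exact ((fderiv ℝ f (x t)).le_opNorm _).trans
    (mul_le_mul_of_nonneg_right (hM _ (mem_image_of_mem x ht)) (norm_nonneg _))

lemma integral_norm_gder_sub_rpow_le (hx : HasW1pOn x x' p a b) (hy : HasW1pOn y y' p a b)
    (hf : ContDiff ℝ 1 f) (hp : 1 ≤ p) (hab : a ≤ b) {M ω : ℝ}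
    (hM : ∀ t ∈ Icc a b, ‖fderiv ℝ f (x t)‖ ≤ M)
    (hω : ∀ t ∈ Icc a b, ‖fderiv ℝ f (x t) - fderiv ℝ f (y t)‖ ≤ ω) :
    ∫ t in a..b, ‖gder f x x' t - gder f y y' t‖ ^ p ≤
      2 ^ (p - 1) *
        (M ^ p * (∫ t in a..b, ‖x' t - y' t‖ ^ p) + ω ^ p * ∫ t in a..b, ‖y' t‖ ^ p) := by
  have hp0 : 0 < p := by linarith
  have hM0 : 0 ≤ M := (norm_nonneg _).trans (hM a (left_mem_Icc.2 hab))
  have hω0 : 0 ≤ ω := (norm_nonneg _).trans (hω a (left_mem_Icc.2 hab))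
  have hu : IntervalIntegrable (fun t => ‖x' t - y' t‖ ^ p) volume a b :=
    (hx.2.2.sub hy.2.2).intervalIntegrable_norm_rpow hp0 hab
  have hy' := hy.2.2.intervalIntegrable_norm_rpow hp0 hab
  have hbound : ∀ t ∈ Icc a b, ‖gder f x x' t - gder f y y' t‖ ^ p ≤
      2 ^ (p - 1) * (M ^ p * ‖x' t - y' t‖ ^ p + ω ^ p * ‖y' t‖ ^ p) := fun t ht => calc
    ‖gder f x x' t - gder f y y' t‖ ^ p ≤ (M * ‖x' t - y' t‖ + ω * ‖y' t‖) ^ p := by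
      gcongr
      exact ((fderiv ℝ f (x t)).norm_apply_sub_apply_le _ _ _).trans
        (add_le_add (by gcongr; exact hM t ht) (by gcongr; exact hω t ht))
    _ ≤ 2 ^ (p - 1) * ((M * ‖x' t - y' t‖) ^ p + (ω * ‖y' t‖) ^ p) :=
      Real.rpow_add_le_mul_rpow_add_rpow (by positivity) (by positivity) hp
    _ = 2 ^ (p - 1) * (M ^ p * ‖x' t - y' t‖ ^ p + ω ^ p * ‖y' t‖ ^ p) := by
      rw [Real.mul_rpow hM0 (norm_nonneg _), Real.mul_rpow hω0 (norm_nonneg _)]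
  calc ∫ t in a..b, ‖gder f x x' t - gder f y y' t‖ ^ p
      ≤ ∫ t in a..b, 2 ^ (p - 1) * (M ^ p * ‖x' t - y' t‖ ^ p + ω ^ p * ‖y' t‖ ^ p) :=
        intervalIntegral.integral_mono_on hab
          (((hx.memLp_gder hf).sub (hy.memLp_gder hf)).intervalIntegrable_norm_rpow hp0 hab)
          (((hu.const_mul _).add (hy'.const_mul _)).const_mul _) hbound
    _ = _ := by
      rw [intervalIntegral.integral_const_mul,
        intervalIntegral.integral_add (hu.const_mul _) (hy'.const_mul _),
        intervalIntegral.integral_const_mul, intervalIntegral.integral_const_mul]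

theorem exists_integral_norm_gder_sub_rpow_lt (hy : HasW1pOn y y' p a b) (hf : ContDiff ℝ 1 f)
    (hp : 1 ≤ p) (hab : a ≤ b) {ε : ℝ} (hε : 0 < ε) :
    ∃ δ > 0, ∀ x x', HasW1pOn x x' p a b → wNorm p a b (x a - y a) (x' - y') < δ →
      ∫ t in a..b, ‖gder f x x' t - gder f y y' t‖ ^ p < ε := by
  have hp0 : 0 < p := by linarith
  have hDf := hf.continuous_fderiv one_ne_zero
  have hK : IsCompact (y '' Icc a b) := isCompact_Icc.image_of_continuousOn hy.continuousOn
  obtain ⟨M, hM⟩ := hK.exists_bound_of_continuousOn hDf.continuousOn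
  set I := ∫ t in a..b, ‖y' t‖ ^ p
  obtain ⟨ω, hωI, hω0, hω1⟩ : ∃ ω, 2 ^ (p - 1) * I * ω ^ p < ε / 2 ∧ ω ∈ Ioc 0 1 :=
    (((tendsto_const_mul_rpow_nhds_zero hp0 _).eventually (gt_mem_nhds (half_pos hε))).filter_mono
      nhdsWithin_le_nhds |>.and (Ioc_mem_nhdsGT one_pos)).exists
  obtain ⟨s, hs, hsω⟩ := hK.exists_forall_dist_lt (fun z _ => hDf.continuousAt) hω0
  set C := 1 + (b - a) ^ (1 - 1 / p)
  have hCw : Tendsto (fun w => C * w) (𝓝 0) (𝓝 0) := by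
    simpa using (continuous_const_mul C).tendsto 0
  obtain ⟨δ, hδ, hδw⟩ := Metric.eventually_nhds_iff.1
    ((hCw.eventually (gt_mem_nhds hs)).and
      ((tendsto_const_mul_rpow_nhds_zero hp0 (2 ^ (p - 1) * (M + 1) ^ p)).eventually
        (gt_mem_nhds (half_pos hε))))
  refine ⟨δ, hδ, fun x x' hx hxy => ?_⟩
  set w := wNorm p a b (x a - y a) (x' - y')
  have hw : C * w < s ∧ 2 ^ (p - 1) * (M + 1) ^ p * w ^ p < ε / 2 :=
    hδw (by rwa [Real.dist_0_eq_abs, abs_of_nonneg (wNorm_nonneg hab)])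
  have hclose : ∀ t ∈ Icc a b, ‖fderiv ℝ f (x t) - fderiv ℝ f (y t)‖ ≤ ω := fun t ht => by
    rw [← dist_eq_norm, dist_comm]
    refine (hsω _ (mem_image_of_mem y ht) _ ?_).le
    rw [dist_comm, dist_eq_norm]
    exact ((hx.sub hy).norm_le_mul_wNorm hp ht).trans_lt hw.1
  have hbound : ∀ t ∈ Icc a b, ‖fderiv ℝ f (x t)‖ ≤ M + 1 := fun t ht =>
    (norm_le_insert' _ (fderiv ℝ f (y t))).trans (add_le_add (hM _ (mem_image_of_mem y ht))
      ((hclose t ht).trans hω1))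
  have hΔ : ∫ t in a..b, ‖x' t - y' t‖ ^ p ≤ w ^ p :=
    integral_norm_rpow_le_wNorm_rpow hp0 hab
  calc ∫ t in a..b, ‖gder f x x' t - gder f y y' t‖ ^ p
      ≤ 2 ^ (p - 1) * ((M + 1) ^ p * (∫ t in a..b, ‖x' t - y' t‖ ^ p) + ω ^ p * I) :=
        hx.integral_norm_gder_sub_rpow_le hy hf hp hab hbound hclose
    _ ≤ 2 ^ (p - 1) * (M + 1) ^ p * w ^ p + 2 ^ (p - 1) * I * ω ^ p := by
        have hM0 : 0 ≤ M :=
          (norm_nonneg _).trans (hM _ (mem_image_of_mem y (left_mem_Icc.2 hab)))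
        have hA : 0 ≤ 2 ^ (p - 1) * (M + 1) ^ p :=
          mul_nonneg (by positivity) (Real.rpow_nonneg (by linarith) _)
        linarith [mul_le_mul_of_nonneg_left hΔ hA]
    _ < ε / 2 + ε / 2 := add_lt_add hw.2 hωI
    _ = ε := add_halves ε

end HasW1pOn

lemma intervalIntegral_indicator_Ioi_comp_sub_le {G : ℝ → ℝ} (hG : 0 ≤ G) {R T r : ℝ}
    (hT : 0 ≤ T) (hr : r ∈ Icc T R) (hint : IntervalIntegrable G volume (-R) 0) :
    ∫ t in (-R)..T, (Ioi 0).indicator (fun t => G (t - r)) t ≤ ∫ θ in (-R)..0, G θ := by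
  have hR : -R ≤ 0 := by linarith [hr.1, hr.2]
  calc ∫ t in (-R)..T, (Ioi 0).indicator (fun t => G (t - r)) t
      = ∫ t in (0 : ℝ)..T, G (t - r) := by
        rw [intervalIntegral.integral_of_le (hR.trans hT), intervalIntegral.integral_of_le hT,
          integral_indicator measurableSet_Ioi, Measure.restrict_restrict measurableSet_Ioi,
          inter_comm, Ioc_inter_Ioi, sup_eq_right.2 hR]
    _ = ∫ θ in (0 - r)..(T - r), G θ := intervalIntegral.integral_comp_sub_right G r
    _ ≤ ∫ θ in (-R)..0, G θ :=
        intervalIntegral.integral_mono_interval (by linarith [hr.2]) (by linarith)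
          (by linarith [hr.1]) (.of_forall hG) hint

section Bfun

variable {N : ℕ} {f : Vec N → Vec N} {φ φ' ψ ψ' : ℝ → Vec N} {p r t : ℝ}

lemma Bfun_of_nonpos (ht : t ≤ 0) : Bfun f φ φ' r t = 0 := if_pos ht

lemma norm_Bfun'_sub_rpow (hp : p ≠ 0) :
    ‖Bfun' f φ φ' r t - Bfun' f ψ ψ' r t‖ ^ p =
      (Ioi 0).indicator (fun t => ‖gder f φ φ' (t - r) - gder f ψ ψ' (t - r)‖ ^ p) t := by
  by_cases ht : t ≤ 0
  · simp [Bfun', ht, Real.zero_rpow hp]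
  · rw [indicator_of_mem (mem_Ioi.2 (not_le.1 ht))]
    simp only [Bfun', if_neg ht, neg_sub_neg, norm_sub_rev]

end Bfun

theorem stmt4_general (N : ℕ) (p : ℝ) (hp : 1 ≤ p) (R T : ℝ) (hT : 0 < T) (hTR : T < R)
    (f : Vec N → Vec N) (hf : ContDiff ℝ 1 f) (φ0 φ0' : ℝ → Vec N)
    (hφ0 : HasW1pOn φ0 φ0' p (-R) 0) :
    ∀ ε > 0, ∃ δ > 0, ∀ φ φ' : ℝ → Vec N, HasW1pOn φ φ' p (-R) 0 →
      wNorm p (-R) 0 (φ (-R) - φ0 (-R)) (fun θ => φ' θ - φ0' θ) < δ →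
      ∀ r ∈ Set.Icc T R,
        wNorm p (-R) T (Bfun f φ φ' r (-R) - Bfun f φ0 φ0' r (-R))
            (fun t => Bfun' f φ φ' r t - Bfun' f φ0 φ0' r t) < ε := by
  intro ε hε
  have hp0 : 0 < p := by linarith
  have hR : -R ≤ 0 := by linarith
  obtain ⟨δ, hδ, hsmall⟩ :=
    hφ0.exists_integral_norm_gder_sub_rpow_lt hf hp hR (Real.rpow_pos_of_pos hε p)
  refine ⟨δ, hδ, fun φ φ' hφ hφδ r hr => ?_⟩
  have hg := ((hφ.memLp_gder hf).sub (hφ0.memLp_gder hf)).intervalIntegrable_norm_rpow hp0 hR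
  rw [Bfun_of_nonpos hR, Bfun_of_nonpos hR, sub_self, wNorm_zero_left hp0.ne',
    ← Real.rpow_rpow_inv hε.le hp0.ne', ← one_div]
  refine Real.rpow_lt_rpow (integral_norm_rpow_nonneg (by linarith)) ?_ (by positivity)
  simp_rw [norm_Bfun'_sub_rpow hp0.ne']
  exact (intervalIntegral_indicator_Ioi_comp_sub_le (fun _ => by positivity) hT.le hr hg).trans_lt
    (hsmall φ φ' hφ hφδ)

/-- if `f` is `C^1`, the family of maps `φ ↦ B_{φ,r}`, indexed by `r ∈ [T,R]`, from
`W^{1,p}([−R,0],ℝ^N)` to `W^{1,p}([−R,T],ℝ^N)` is pointwise equicontinuous: for every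
`φ0 ∈ W^{1,p}([−R,0])` and `ε > 0` there is `δ > 0` such that
`‖φ − φ0‖_{W^{1,p}[−R,0]} < δ` implies `‖B_{φ,r} − B_{φ0,r}‖_{W^{1,p}[−R,T]} < ε` for all
`r ∈ [T,R]`. -/
theorem stmt4 (N : ℕ) (hN : 1 ≤ N) (p : ℝ) (hp : 1 ≤ p) (R T : ℝ) (hT : 0 < T) (hTR : T < R)
    (f : Vec N → Vec N) (hf : ContDiff ℝ 1 f) (φ0 φ0' : ℝ → Vec N)
    (hφ0 : HasW1pOn φ0 φ0' p (-R) 0) :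
    ∀ ε > 0, ∃ δ > 0, ∀ φ φ' : ℝ → Vec N, HasW1pOn φ φ' p (-R) 0 →
      wNorm p (-R) 0 (φ (-R) - φ0 (-R)) (fun θ => φ' θ - φ0' θ) < δ →
      ∀ r ∈ Set.Icc T R,
        wNorm p (-R) T (Bfun f φ φ' r (-R) - Bfun f φ0 φ0' r (-R))
            (fun t => Bfun' f φ φ' r t - Bfun' f φ0 φ0' r t) < ε :=
  stmt4_general N p hp R T hT hTR f hf φ0 φ0' hφ0
end
end

section
/- Let 1 ≤ p < ∞, R > 0, N ≥ 1 an integer, let f : ℝ^N × ℝ^N → ℝ^N be locally Lipschitz continuous, let B ⊂ C([−R,0],ℝ^N) be a bounded set and δ > 0. Then for all sufficiently small T > 0 there exists c ∈ (0,1) such that for every (φ,r) ∈ B × [0,R] the operator 𝒯(·,φ,r) maps Γ̄(δ) into Γ_{1,p}(δ) and is a uniform contraction: for all y_1, y_2 ∈ Γ̄(δ), ‖𝒯(y_1,φ,r) − 𝒯(y_2,φ,r)‖_{W^{1,p}[−R,T]} ≤ c·‖y_1 − y_2‖_{C[−R,T]}. -/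
open MeasureTheory Set ENNReal

noncomputable section

/-- The static prolongation `φ̄` of `φ : [−R,0] → ℝ^N`. -/
def prolong {N : ℕ} (φ : ℝ → Vec N) : ℝ → Vec N := fun t => if t ≤ 0 then φ t else φ 0

/-- `𝒯(y,φ,r)(t) = 0` for `t ≤ 0` and `𝒯(y,φ,r)(t) = ∫_0^t f((y+φ̄)(s),(y+φ̄)(s−r)) ds` for
`t ∈ [0,T]`. -/
def Tmap {N : ℕ} (f : Vec N × Vec N → Vec N) (y φ : ℝ → Vec N) (r : ℝ) : ℝ → Vec N :=
  fun t => if t ≤ 0 then 0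
    else ∫ s in (0:ℝ)..t, f ((y + prolong φ) s, (y + prolong φ) (s - r))

/-- The almost-everywhere derivative of `𝒯(y,φ,r)`. -/
def Tderiv {N : ℕ} (f : Vec N × Vec N → Vec N) (y φ : ℝ → Vec N) (r : ℝ) : ℝ → Vec N :=
  fun t => if t ≤ 0 then 0 else f ((y + prolong φ) t, (y + prolong φ) (t - r))

/-! On `[-R, T]` every trajectory `y + φ̄` with `y ∈ Γ̄(δ)` and `φ ∈ B` stays in one closed ball,
on which `f` is bounded by some `K` and Lipschitz with some constant `L`. Since `𝒯(y,φ,r)` vanishes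
up to time `0` and is the primitive of its integrand, its `W^{1,p}` norm is the `L^p` norm of the
integrand over `[0, T]`: at most `T^{1/p} K` for `𝒯(y,φ,r)` and at most `T^{1/p} L ‖y₁ - y₂‖` for a
difference. Both factors `T^{1/p}` become small as `T → 0`. -/

open Filter Topology

section ZeroExtension

variable {E : Type*} [NormedAddCommGroup E] {g : ℝ → E} {a b : ℝ}

lemma ite_nonpos_eq_indicator (g : ℝ → E) :
    (fun t => if t ≤ 0 then 0 else g t) = (Ioi 0).indicator g := by
  ext t
  by_cases ht : t ≤ 0 <;> simp [ht, indicator_apply]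

lemma intervalIntegral_ite_nonpos [NormedSpace ℝ E] (g : ℝ → E) (ha : a ≤ 0) :
    ∫ t in a..b, (if t ≤ 0 then 0 else g t) = if b ≤ 0 then 0 else ∫ t in 0..b, g t := by
  split_ifs with hb
  · rw [intervalIntegral.integral_congr (g := fun _ => 0), intervalIntegral.integral_zero]
    intro t ht
    exact if_pos (ht.2.trans (max_le ha hb))
  · have hb : 0 < b := lt_of_not_ge hb
    rw [intervalIntegral.integral_of_le (ha.trans hb.le), intervalIntegral.integral_of_le hb.le,
      ite_nonpos_eq_indicator, setIntegral_indicator measurableSet_Ioi,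
      Ioc_inter_Ioi, max_eq_right ha]

lemma integral_norm_rpow_ite_nonpos_le {p K : ℝ} (hp : 0 < p) (ha : a ≤ 0) (hb : 0 ≤ b)
    (hg : ∀ t ∈ Ioc 0 b, ‖g t‖ ≤ K) :
    ∫ t in a..b, ‖if t ≤ 0 then 0 else g t‖ ^ p ≤ b * K ^ p := by
  have hnorm : (fun t => ‖if t ≤ 0 then 0 else g t‖ ^ p) =
      fun t => if t ≤ 0 then 0 else ‖g t‖ ^ p := by
    ext t
    split_ifs <;> simp [Real.zero_rpow hp.ne']
  rw [hnorm, intervalIntegral_ite_nonpos _ ha]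
  split_ifs with hb0
  · simp [le_antisymm hb0 hb]
  calc ∫ t in 0..b, ‖g t‖ ^ p ≤ ‖∫ t in 0..b, ‖g t‖ ^ p‖ := Real.le_norm_self _
    _ ≤ K ^ p * |b - 0| := by
      refine intervalIntegral.norm_integral_le_of_norm_le_const fun t ht => ?_
      rw [uIoc_of_le hb] at ht
      rw [Real.norm_of_nonneg (by positivity)]
      exact Real.rpow_le_rpow (norm_nonneg _) (hg t ht) hp.le
    _ = b * K ^ p := by rw [sub_zero, abs_of_nonneg hb, mul_comm]

lemma memLp_ite_nonpos (hg : ContinuousOn g (Icc 0 b)) (q : ℝ≥0∞) :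
    MemLp (fun t => if t ≤ 0 then 0 else g t) q (volume.restrict (Icc a b)) := by
  obtain ⟨C, hC⟩ := isCompact_Icc.exists_bound_of_continuousOn hg
  have hgLp : MemLp g q (volume.restrict (Icc 0 b)) :=
    .of_bound (hg.aestronglyMeasurable measurableSet_Icc) C
      ((ae_restrict_iff' measurableSet_Icc).2 (ae_of_all _ hC))
  rw [ite_nonpos_eq_indicator, memLp_indicator_iff_restrict measurableSet_Ioi,
    Measure.restrict_restrict measurableSet_Ioi]
  exact hgLp.mono_measure (Measure.restrict_mono
    (show Ioi 0 ∩ Icc a b ⊆ Icc 0 b from fun _ ht => ⟨ht.1.le, ht.2.2⟩) le_rfl)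

lemma intervalIntegrable_ite_nonpos (hab : a ≤ b) (hg : ContinuousOn g (Icc 0 b)) :
    IntervalIntegrable (fun t => if t ≤ 0 then 0 else g t) volume a b := by
  refine IntegrableOn.intervalIntegrable ?_
  rw [uIcc_of_le hab]
  exact (memLp_ite_nonpos hg 1).integrable le_rfl

end ZeroExtension

section Sobolev

variable {N : ℕ} {g : ℝ → Vec N} {p a b : ℝ}

lemma hasW1pOn_ite_nonpos (ha : a ≤ 0) (hab : a ≤ b) (hg : ContinuousOn g (Icc 0 b)) :
    HasW1pOn (fun t => if t ≤ 0 then 0 else ∫ s in 0..t, g s)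
      (fun t => if t ≤ 0 then 0 else g t) p a b :=
  ⟨fun _ _ => by beta_reduce; rw [if_pos ha, zero_add, intervalIntegral_ite_nonpos _ ha],
    intervalIntegrable_ite_nonpos hab hg, memLp_ite_nonpos hg _⟩

lemma wNorm_ite_nonpos_le {K : ℝ} (hp : 0 < p) (ha : a ≤ 0) (hb : 0 ≤ b) (hK : 0 ≤ K)
    (hg : ∀ t ∈ Ioc 0 b, ‖g t‖ ≤ K) :
    wNorm p a b 0 (fun t => if t ≤ 0 then 0 else g t) ≤ b ^ (1 / p) * K := by
  rw [wNorm, norm_zero, Real.zero_rpow hp.ne', zero_add]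
  calc (∫ t in a..b, ‖if t ≤ 0 then 0 else g t‖ ^ p) ^ (1 / p)
      ≤ (b * K ^ p) ^ (1 / p) :=
        Real.rpow_le_rpow (intervalIntegral.integral_nonneg (ha.trans hb) fun _ _ => by positivity)
          (integral_norm_rpow_ite_nonpos_le hp ha hb hg) (by positivity)
    _ = b ^ (1 / p) * K := by
        rw [Real.mul_rpow hb (by positivity), one_div, Real.rpow_rpow_inv hK hp.ne']

end Sobolev

section Supremum

variable {N : ℕ} {y : ℝ → Vec N} {a b : ℝ}

lemma norm_le_cNorm (hy : ContinuousOn y (Icc a b)) {t : ℝ} (ht : t ∈ Icc a b) :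
    ‖y t‖ ≤ cNorm a b y :=
  le_csSup (isCompact_Icc.image_of_continuousOn hy.norm).bddAbove ⟨t, ht, rfl⟩

lemma cNorm_nonneg (hab : a ≤ b) (hy : ContinuousOn y (Icc a b)) : 0 ≤ cNorm a b y :=
  (norm_nonneg _).trans (norm_le_cNorm hy ⟨le_rfl, hab⟩)

end Supremum

section Delay

variable {N : ℕ} {φ : ℝ → Vec N} {R T r : ℝ}

lemma prolong_eq_comp_min (φ : ℝ → Vec N) : prolong φ = fun t => φ (min t 0) := by
  ext1 t
  by_cases ht : t ≤ 0 <;> simp [prolong, ht, min_eq_right_of_lt, not_le.mp]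

lemma min_zero_mem_Icc (hR : 0 ≤ R) {t : ℝ} (ht : -R ≤ t) : min t 0 ∈ Icc (-R) 0 :=
  ⟨le_min ht (neg_nonpos.2 hR), min_le_right _ _⟩

lemma continuousOn_prolong (hR : 0 ≤ R) (hφ : ContinuousOn φ (Icc (-R) 0)) :
    ContinuousOn (prolong φ) (Ici (-R)) := by
  rw [prolong_eq_comp_min]
  exact hφ.comp (continuous_id.min continuous_const).continuousOn
    fun _ ht => min_zero_mem_Icc hR ht

lemma norm_prolong_le (hR : 0 ≤ R) {M : ℝ} (hφ : ∀ t ∈ Icc (-R) 0, ‖φ t‖ ≤ M) {t : ℝ}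
    (ht : -R ≤ t) : ‖prolong φ t‖ ≤ M := by
  rw [prolong_eq_comp_min]
  exact hφ _ (min_zero_mem_Icc hR ht)

lemma sub_mem_Icc_of_mem_Icc (hr : r ∈ Icc 0 R) {s : ℝ} (hs : s ∈ Icc 0 T) :
    s - r ∈ Icc (-R) T :=
  ⟨by linarith [hr.2, hs.1], by linarith [hr.1, hs.2]⟩

lemma continuousOn_delayPair {E : Type*} [TopologicalSpace E] {u : ℝ → E}
    (hr : r ∈ Icc 0 R) (hu : ContinuousOn u (Icc (-R) T)) :
    ContinuousOn (fun s => (u s, u (s - r))) (Icc 0 T) :=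
  (hu.mono (Icc_subset_Icc_left (by linarith [hr.1, hr.2]))).prodMk
    (hu.comp (continuous_id.sub continuous_const).continuousOn fun _ => sub_mem_Icc_of_mem_Icc hr)

lemma dist_delayPair_le {E : Type*} [PseudoMetricSpace E] {u₁ u₂ : ℝ → E} {C : ℝ}
    (hr : r ∈ Icc 0 R) (hu : ∀ τ ∈ Icc (-R) T, dist (u₁ τ) (u₂ τ) ≤ C) {s : ℝ}
    (hs : s ∈ Icc 0 T) : dist (u₁ s, u₁ (s - r)) (u₂ s, u₂ (s - r)) ≤ C :=
  max_le (hu s (Icc_subset_Icc_left (by linarith [hr.1, hr.2]) hs))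
    (hu _ (sub_mem_Icc_of_mem_Icc hr hs))

end Delay

lemma eventually_rpow_mul_lt {q C ε : ℝ} (hq : 0 < q) (hε : 0 < ε) :
    ∀ᶠ T in 𝓝[>] (0 : ℝ), T ^ q * C < ε := by
  have h : Tendsto (fun T : ℝ => T ^ q * C) (𝓝 0) (𝓝 0) := by
    simpa [Real.zero_rpow hq.ne'] using
      (Real.continuousAt_rpow_const 0 q (Or.inr hq.le)).tendsto.mul_const C
  exact (h.eventually (gt_mem_nhds hε)).filter_mono nhdsWithin_le_nhds

section DelayOperator

variable {N : ℕ} {f : Vec N × Vec N → Vec N} {y y₁ y₂ φ : ℝ → Vec N} {R T r : ℝ}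

lemma Tmap_of_nonpos {t : ℝ} (ht : t ≤ 0) : Tmap f y φ r t = 0 := if_pos ht

lemma Tderiv_sub_Tderiv :
    (fun t => Tderiv f y₁ φ r t - Tderiv f y₂ φ r t) = fun t => if t ≤ 0 then 0 else
      f ((y₁ + prolong φ) t, (y₁ + prolong φ) (t - r)) -
        f ((y₂ + prolong φ) t, (y₂ + prolong φ) (t - r)) := by
  ext1 t
  by_cases ht : t ≤ 0 <;> simp [Tderiv, ht]

lemma delayPair_mem_closedBall (hr : r ∈ Icc 0 R) {M : ℝ} (hφ : ∀ t ∈ Icc (-R) 0, ‖φ t‖ ≤ M)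
    (hy : ContinuousOn y (Icc (-R) T)) {s : ℝ} (hs : s ∈ Icc 0 T) :
    ((y + prolong φ) s, (y + prolong φ) (s - r)) ∈
      Metric.closedBall (0 : Vec N × Vec N) (cNorm (-R) T y + M) := by
  refine Metric.mem_closedBall.2 (dist_delayPair_le (u₂ := fun _ => 0) hr (fun τ hτ => ?_) hs)
  rw [dist_zero_right]
  exact (norm_add_le _ _).trans (add_le_add (norm_le_cNorm hy hτ)
    (norm_prolong_le (hr.1.trans hr.2) hφ hτ.1))

lemma dist_delayPair_le_cNorm (hr : r ∈ Icc 0 R) (hy₁ : ContinuousOn y₁ (Icc (-R) T))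
    (hy₂ : ContinuousOn y₂ (Icc (-R) T)) {s : ℝ} (hs : s ∈ Icc 0 T) :
    dist ((y₁ + prolong φ) s, (y₁ + prolong φ) (s - r))
      ((y₂ + prolong φ) s, (y₂ + prolong φ) (s - r)) ≤ cNorm (-R) T (fun t => y₁ t - y₂ t) := by
  refine dist_delayPair_le hr (fun τ hτ => ?_) hs
  rw [dist_eq_norm, Pi.add_apply, Pi.add_apply, add_sub_add_right_eq_sub]
  exact norm_le_cNorm (hy₁.sub hy₂) hτ

variable {p : ℝ}

lemma hasW1pOn_Tmap (hf : Continuous f) (hr : r ∈ Icc 0 R) (hT : 0 ≤ T)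
    (hφ : ContinuousOn φ (Icc (-R) 0)) (hy : ContinuousOn y (Icc (-R) T)) :
    HasW1pOn (Tmap f y φ r) (Tderiv f y φ r) p (-R) T :=
  have hR : 0 ≤ R := hr.1.trans hr.2
  hasW1pOn_ite_nonpos (by linarith) (by linarith) <| hf.comp_continuousOn <|
    continuousOn_delayPair hr (hy.add ((continuousOn_prolong hR hφ).mono Icc_subset_Ici_self))

lemma wNorm_Tmap_le (hp : 0 < p) (hR : 0 ≤ R) (hT : 0 ≤ T) {K : ℝ} (hK : 0 ≤ K)
    (hf : ∀ s ∈ Ioc 0 T, ‖f ((y + prolong φ) s, (y + prolong φ) (s - r))‖ ≤ K) :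
    wNorm p (-R) T (Tmap f y φ r (-R)) (Tderiv f y φ r) ≤ T ^ (1 / p) * K := by
  rw [Tmap_of_nonpos (by linarith)]
  exact wNorm_ite_nonpos_le hp (by linarith) hT hK hf

lemma wNorm_Tmap_sub_le (hp : 0 < p) (hr : r ∈ Icc 0 R) (hT : 0 ≤ T)
    {K : Set (Vec N × Vec N)} {L : NNReal} (hL : LipschitzOnWith L f K)
    (hy₁ : ContinuousOn y₁ (Icc (-R) T)) (hy₂ : ContinuousOn y₂ (Icc (-R) T))
    (hK₁ : ∀ s ∈ Icc 0 T, ((y₁ + prolong φ) s, (y₁ + prolong φ) (s - r)) ∈ K)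
    (hK₂ : ∀ s ∈ Icc 0 T, ((y₂ + prolong φ) s, (y₂ + prolong φ) (s - r)) ∈ K) :
    wNorm p (-R) T (Tmap f y₁ φ r (-R) - Tmap f y₂ φ r (-R))
        (fun t => Tderiv f y₁ φ r t - Tderiv f y₂ φ r t) ≤
      T ^ (1 / p) * (L * cNorm (-R) T (fun t => y₁ t - y₂ t)) := by
  have hR : 0 ≤ R := hr.1.trans hr.2
  rw [Tmap_of_nonpos (by linarith), Tmap_of_nonpos (by linarith), sub_zero, Tderiv_sub_Tderiv]
  refine wNorm_ite_nonpos_le hp (by linarith) hT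
    (mul_nonneg L.2 (cNorm_nonneg (by linarith) (hy₁.sub hy₂))) fun s hs => ?_
  replace hs := Ioc_subset_Icc_self hs
  rw [← dist_eq_norm]
  exact (hL.dist_le_mul _ (hK₁ s hs) _ (hK₂ s hs)).trans
    (mul_le_mul_of_nonneg_left (dist_delayPair_le_cNorm hr hy₁ hy₂ hs) L.2)

end DelayOperator

theorem stmt6_general (N : ℕ) (p : ℝ) (hp : 1 ≤ p) (R : ℝ) (hR : 0 < R)
    (f : Vec N × Vec N → Vec N) (hf : LocallyLipschitz f)
    (B : Set (ℝ → Vec N)) (hBc : ∀ φ ∈ B, ContinuousOn φ (Set.Icc (-R) 0))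
    (hBb : ∃ M, ∀ φ ∈ B, ∀ t ∈ Set.Icc (-R) (0:ℝ), ‖φ t‖ ≤ M)
    (δ : ℝ) (hδ : 0 < δ) :
    ∃ T0 > 0, ∀ T : ℝ, 0 < T → T ≤ T0 → ∃ c, 0 < c ∧ c < 1 ∧
      ∀ φ ∈ B, ∀ r ∈ Set.Icc (0:ℝ) R,
        (∀ y : ℝ → Vec N, ContinuousOn y (Set.Icc (-R) T) →
          (∀ t ∈ Set.Icc (-R) (0:ℝ), y t = 0) → cNorm (-R) T y ≤ δ →
          (∀ t ∈ Set.Icc (-R) (0:ℝ), Tmap f y φ r t = 0) ∧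
            HasW1pOn (Tmap f y φ r) (Tderiv f y φ r) p (-R) T ∧
            wNorm p (-R) T (Tmap f y φ r (-R)) (Tderiv f y φ r) < δ) ∧
        ∀ y₁ y₂ : ℝ → Vec N,
          ContinuousOn y₁ (Set.Icc (-R) T) → (∀ t ∈ Set.Icc (-R) (0:ℝ), y₁ t = 0) →
            cNorm (-R) T y₁ ≤ δ →
          ContinuousOn y₂ (Set.Icc (-R) T) → (∀ t ∈ Set.Icc (-R) (0:ℝ), y₂ t = 0) →
            cNorm (-R) T y₂ ≤ δ →
          wNorm p (-R) T (Tmap f y₁ φ r (-R) - Tmap f y₂ φ r (-R))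
              (fun t => Tderiv f y₁ φ r t - Tderiv f y₂ φ r t) ≤
            c * cNorm (-R) T (fun t => y₁ t - y₂ t) := by
  have hp0 : 0 < p := zero_lt_one.trans_le hp
  obtain ⟨M, hM⟩ := hBb
  set K := Metric.closedBall (0 : Vec N × Vec N) (δ + M)
  have hK : IsCompact K := isCompact_closedBall _ _
  obtain ⟨Kb, hKb⟩ := hK.exists_bound_of_continuousOn hf.continuous.continuousOn
  obtain ⟨L, hL⟩ := hf.locallyLipschitzOn.exists_lipschitzOnWith_of_compact hK
  obtain ⟨T0, hT0, hsmall⟩ := mem_nhdsGT_iff_exists_Ioc_subset.1 <|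
    (eventually_rpow_mul_lt (C := Kb) (one_div_pos.2 hp0) hδ).and
      (eventually_rpow_mul_lt (C := L + 1) (one_div_pos.2 hp0) one_pos)
  refine ⟨T0, hT0, fun T hT hTT0 => ?_⟩
  obtain ⟨hTKb, hTL⟩ := hsmall ⟨hT, hTT0⟩
  refine ⟨T ^ (1 / p) * (L + 1), by positivity, hTL, fun φ hφ r hr => ?_⟩
  have hmem : ∀ y : ℝ → Vec N, ContinuousOn y (Icc (-R) T) → cNorm (-R) T y ≤ δ →
      ∀ s ∈ Icc 0 T, ((y + prolong φ) s, (y + prolong φ) (s - r)) ∈ K := fun y hy hyδ s hs =>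
    Metric.closedBall_subset_closedBall (by linarith) (delayPair_mem_closedBall hr (hM φ hφ) hy hs)
  refine ⟨fun y hy _ hyδ => ?_, fun y₁ y₂ hy₁ _ hy₁δ hy₂ _ hy₂δ => ?_⟩
  · have hKb0 : 0 ≤ Kb := (norm_nonneg _).trans (hKb _ (hmem y hy hyδ T ⟨hT.le, le_rfl⟩))
    refine ⟨fun t ht => Tmap_of_nonpos ht.2, hasW1pOn_Tmap hf.continuous hr hT.le (hBc φ hφ) hy,
      (wNorm_Tmap_le hp0 hR.le hT.le hKb0 fun s hs => ?_).trans_lt hTKb⟩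
    exact hKb _ (hmem y hy hyδ s (Ioc_subset_Icc_self hs))
  · have hcN := cNorm_nonneg (by linarith) (hy₁.sub hy₂)
    calc _ ≤ T ^ (1 / p) * (L * cNorm (-R) T (fun t => y₁ t - y₂ t)) :=
          wNorm_Tmap_sub_le hp0 hr hT.le hL hy₁ hy₂ (hmem y₁ hy₁ hy₁δ) (hmem y₂ hy₂ hy₂δ)
      _ ≤ T ^ (1 / p) * (L + 1) * cNorm (-R) T (fun t => y₁ t - y₂ t) := by
          rw [mul_assoc]
          gcongr
          linarith

/-- let `f` be locally Lipschitz, `B ⊂ C([−R,0],ℝ^N)` bounded and `δ > 0`.  For all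
sufficiently small `T > 0` there is `c ∈ (0,1)` such that for every `(φ,r) ∈ B × [0,R]` the
operator `𝒯(·,φ,r)` maps `Γ̄(δ)` into `Γ_{1,p}(δ)` and is a uniform contraction:
`‖𝒯(y₁,φ,r) − 𝒯(y₂,φ,r)‖_{W^{1,p}[−R,T]} ≤ c‖y₁ − y₂‖_{C[−R,T]}` for all `y₁,y₂ ∈ Γ̄(δ)`.
Here `Γ̄(δ)` is the set of continuous `y : [−R,T] → ℝ^N` vanishing on `[−R,0]` with
`‖y‖_{C[−R,T]} ≤ δ`, and membership of `Γ_{1,p}(δ)` means: vanishing on `[−R,0]`, belonging to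
`W^{1,p}([−R,T],ℝ^N)`, and `W^{1,p}`-norm `< δ`. -/
theorem stmt6 (N : ℕ) (hN : 1 ≤ N) (p : ℝ) (hp : 1 ≤ p) (R : ℝ) (hR : 0 < R)
    (f : Vec N × Vec N → Vec N) (hf : LocallyLipschitz f)
    (B : Set (ℝ → Vec N)) (hBc : ∀ φ ∈ B, ContinuousOn φ (Set.Icc (-R) 0))
    (hBb : ∃ M, ∀ φ ∈ B, ∀ t ∈ Set.Icc (-R) (0:ℝ), ‖φ t‖ ≤ M)
    (δ : ℝ) (hδ : 0 < δ) :
    ∃ T0 > 0, ∀ T : ℝ, 0 < T → T ≤ T0 → ∃ c, 0 < c ∧ c < 1 ∧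
      ∀ φ ∈ B, ∀ r ∈ Set.Icc (0:ℝ) R,
        (∀ y : ℝ → Vec N, ContinuousOn y (Set.Icc (-R) T) →
          (∀ t ∈ Set.Icc (-R) (0:ℝ), y t = 0) → cNorm (-R) T y ≤ δ →
          (∀ t ∈ Set.Icc (-R) (0:ℝ), Tmap f y φ r t = 0) ∧
            HasW1pOn (Tmap f y φ r) (Tderiv f y φ r) p (-R) T ∧
            wNorm p (-R) T (Tmap f y φ r (-R)) (Tderiv f y φ r) < δ) ∧
        ∀ y₁ y₂ : ℝ → Vec N,
          ContinuousOn y₁ (Set.Icc (-R) T) → (∀ t ∈ Set.Icc (-R) (0:ℝ), y₁ t = 0) →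
            cNorm (-R) T y₁ ≤ δ →
          ContinuousOn y₂ (Set.Icc (-R) T) → (∀ t ∈ Set.Icc (-R) (0:ℝ), y₂ t = 0) →
            cNorm (-R) T y₂ ≤ δ →
          wNorm p (-R) T (Tmap f y₁ φ r (-R) - Tmap f y₂ φ r (-R))
              (fun t => Tderiv f y₁ φ r t - Tderiv f y₂ φ r t) ≤
            c * cNorm (-R) T (fun t => y₁ t - y₂ t) :=
  stmt6_general N p hp R hR f hf B hBc hBb δ hδ
end
end

section
/- Let 1 ≤ p < ∞, N ≥ 1 an integer, f ∈ L^p(ℝ,ℝ^N), and let a < b be real numbers. Then (∫_a^b |∫_s^t (f(x+y) − f(x+u)) dy|^p dx)^{1/p} = o(|t−s|) as |t−s| → 0, uniformly in u between s and t: for every ε > 0 there exists δ > 0 such that for all s, t, u ∈ ℝ with |t−s| ≤ δ and u lying between s and t, (∫_a^b |∫_s^t (f(x+y) − f(x+u)) dy|^p dx)^{1/p} ≤ ε|t−s|. -/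
/-!
Hölder's inequality in `y` gives
`‖∫_s^t (f(x+y) - f(x+u)) dy‖^p ≤ |t-s|^(p-1) ∫_s^t ‖f(x+y) - f(x+u)‖^p dy`.
Integrating in `x` and exchanging the integrals, the `p`-th power of the left-hand side is at most
`|t-s|^p · sup_{|w| ≤ |t-s|} ‖f(· + w) - f‖_p^p`, and this supremum tends to `0` because
translation is continuous on `L^p` for `p < ∞`.
-/

open MeasureTheory Set

noncomputable section

open Filter
open scoped ENNReal Topology Interval

namespace MeasureTheory

section Translation

variable {G E : Type*} [AddCommGroup G] [MeasurableSpace G] [NormedAddCommGroup E]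
  {μ : Measure G} [μ.IsAddRightInvariant] {f : G → E}

theorem eLpNorm_comp_add_right_sub_comp_add_right [MeasurableAdd G]
    (hf : AEStronglyMeasurable f μ) (p : ℝ≥0∞) (v w : G) :
    eLpNorm (fun x => f (x + v) - f (x + w)) p μ =
      eLpNorm (fun x => f (x + (v - w)) - f x) p μ := by
  have hg : AEStronglyMeasurable (fun x => f (x + (v - w)) - f x) μ :=
    (hf.comp_measurePreserving (measurePreserving_add_right μ (v - w))).sub hf
  rw [← eLpNorm_comp_measurePreserving hg (measurePreserving_add_right μ w)]
  congr with x
  simp [add_assoc]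

theorem MemLp.tendsto_eLpNorm_comp_add_right_sub [TopologicalSpace G] [IsTopologicalAddGroup G]
    [BorelSpace G] [IsLocallyFiniteMeasure μ] [μ.InnerRegularCompactLTTop]
    {p : ℝ≥0∞} [Fact (1 ≤ p)] (hf : MemLp f p μ) (hp : p ≠ ∞) :
    Tendsto (fun w => eLpNorm (fun x => f (x + w) - f x) p μ) (𝓝 0) (𝓝 0) := by
  let shift : C(G, C(G, G)) := ContinuousMap.curry ⟨fun z : G × G => z.2 + z.1, by fun_prop⟩
  have hshift (w : G) : MeasurePreserving (shift w) μ μ := measurePreserving_add_right μ w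
  let T (w : G) : Lp E p μ := Lp.compMeasurePreserving (shift w) (hshift w) (hf.toLp f)
  have hT : Continuous T := continuous_const.compMeasurePreservingLp shift.continuous hshift hp
  have hT_coe (w : G) : T w =ᵐ[μ] fun x => f (x + w) :=
    (Lp.coeFn_compMeasurePreserving _ _).trans
      ((hshift w).quasiMeasurePreserving.ae_eq_comp hf.coeFn_toLp)
  have hT_sub (w : G) : eLpNorm (fun x => f (x + w) - f x) p μ = ‖T w - T 0‖ₑ := by
    rw [Lp.enorm_def]
    refine eLpNorm_congr_ae ?_
    filter_upwards [Lp.coeFn_sub (T w) (T 0), hT_coe w, hT_coe 0] with x hx hw h0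
    rw [hx, Pi.sub_apply, hw, h0, add_zero]
  simp_rw [hT_sub]
  simpa using ((hT.tendsto 0).sub_const (T 0)).enorm

theorem AEStronglyMeasurable.comp_add_prod [MeasurableAdd₂ G] [SFinite μ]
    (hf : AEStronglyMeasurable f μ) :
    AEStronglyMeasurable (fun z : G × G => f (z.1 + z.2)) (μ.prod μ) :=
  hf.comp_fst.comp_measurePreserving (measurePreserving_add_prod μ μ)

end Translation

section Holder

variable {α β E : Type*} [MeasurableSpace α] [MeasurableSpace β] [NormedAddCommGroup E]
  [NormedSpace ℝ E]

theorem enorm_integral_rpow_le {μ : Measure α} {g : α → E} (hg : AEStronglyMeasurable g μ)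
    {p : ℝ} (hp : 1 ≤ p) :
    ‖∫ x, g x ∂μ‖ₑ ^ p ≤ μ univ ^ (p - 1) * ∫⁻ x, ‖g x‖ₑ ^ p ∂μ := by
  have hp0 : 0 < p := one_pos.trans_le hp
  have holder := eLpNorm_le_eLpNorm_mul_rpow_measure_univ (p := 1) (q := ENNReal.ofReal p)
    (by simpa using hp) hg
  rw [eLpNorm_one_eq_lintegral_enorm, eLpNorm_eq_lintegral_rpow_enorm_toReal (by simpa using hp0)
    ENNReal.ofReal_ne_top, ENNReal.toReal_ofReal hp0.le] at holder
  calc ‖∫ x, g x ∂μ‖ₑ ^ p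
      ≤ ((∫⁻ x, ‖g x‖ₑ ^ p ∂μ) ^ (1 / p) * μ univ ^ (1 / ENNReal.toReal 1 - 1 / p)) ^ p := by
        gcongr
        exact (enorm_integral_le_lintegral_enorm g).trans holder
    _ = μ univ ^ (p - 1) * ∫⁻ x, ‖g x‖ₑ ^ p ∂μ := by
        rw [ENNReal.mul_rpow_of_nonneg _ _ hp0.le, ← ENNReal.rpow_mul, ← ENNReal.rpow_mul,
          one_div_mul_cancel hp0.ne', ENNReal.rpow_one, mul_comm]
        congr 2
        field_simp
        simp

variable {μ : Measure α} {ν : Measure β} [SFinite μ] [SFinite ν] {F : α → β → E} {p : ℝ}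

theorem lintegral_enorm_integral_rpow_le
    (hF : AEStronglyMeasurable (Function.uncurry F) (μ.prod ν)) (hp : 1 ≤ p) :
    ∫⁻ x, ‖∫ y, F x y ∂ν‖ₑ ^ p ∂μ ≤ ν univ ^ (p - 1) * ∫⁻ y, ∫⁻ x, ‖F x y‖ₑ ^ p ∂μ ∂ν := by
  calc ∫⁻ x, ‖∫ y, F x y ∂ν‖ₑ ^ p ∂μ
      ≤ ∫⁻ x, ν univ ^ (p - 1) * ∫⁻ y, ‖F x y‖ₑ ^ p ∂ν ∂μ := by
        refine lintegral_mono_ae ?_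
        filter_upwards [hF.prodMk_left] with x hx
        exact enorm_integral_rpow_le hx hp
    _ = ν univ ^ (p - 1) * ∫⁻ y, ∫⁻ x, ‖F x y‖ₑ ^ p ∂μ ∂ν := by
        have hFp : AEMeasurable (Function.uncurry fun x y => ‖F x y‖ₑ ^ p) (μ.prod ν) :=
          hF.enorm.pow_const p
        exact (lintegral_const_mul'' _ hFp.lintegral_prod_right').trans
          (congrArg _ (lintegral_lintegral_swap hFp))

theorem lintegral_enorm_integral_rpow_le_of_ae_le
    (hF : AEStronglyMeasurable (Function.uncurry F) (μ.prod ν)) (hp : 1 ≤ p) {C : ℝ≥0∞}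
    (hC : ∀ᵐ y ∂ν, ∫⁻ x, ‖F x y‖ₑ ^ p ∂μ ≤ C ^ p) :
    ∫⁻ x, ‖∫ y, F x y ∂ν‖ₑ ^ p ∂μ ≤ (ν univ * C) ^ p := by
  have hp0 : 0 ≤ p - 1 := sub_nonneg.2 hp
  calc ∫⁻ x, ‖∫ y, F x y ∂ν‖ₑ ^ p ∂μ
      ≤ ν univ ^ (p - 1) * ∫⁻ _ : β, C ^ p ∂ν :=
        (lintegral_enorm_integral_rpow_le hF hp).trans (mul_right_mono (lintegral_mono_ae hC))
    _ = (ν univ * C) ^ p := by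
        rw [lintegral_const, ENNReal.mul_rpow_of_nonneg _ _ (by linarith), mul_comm (C ^ p),
          ← mul_assoc]
        congr 1
        conv_lhs => enter [2]; rw [← ENNReal.rpow_one (ν univ)]
        rw [← ENNReal.rpow_add_of_nonneg _ _ hp0 zero_le_one, sub_add_cancel]

end Holder

section TranslationDifference

variable {G E : Type*} [AddCommGroup G] [MeasurableSpace G] [MeasurableAdd₂ G]
  [NormedAddCommGroup E] [NormedSpace ℝ E] {μ : Measure G} [μ.IsAddRightInvariant] [SFinite μ]
  {f : G → E}

theorem lintegral_enorm_setIntegral_sub_comp_add_rpow_le (hf : AEStronglyMeasurable f μ) {p : ℝ}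
    (hp : 1 ≤ p) (A : Set G) {B : Set G} (hB : MeasurableSet B) (u : G) {ε : ℝ≥0∞}
    (hε : ∀ y ∈ B, eLpNorm (fun x => f (x + (y - u)) - f x) (ENNReal.ofReal p) μ ≤ ε) :
    ∫⁻ x in A, ‖∫ y in B, (f (x + y) - f (x + u)) ∂μ‖ₑ ^ p ∂μ ≤ (μ B * ε) ^ p := by
  have hF : AEStronglyMeasurable (Function.uncurry fun x y => f (x + y) - f (x + u))
      ((μ.restrict A).prod (μ.restrict B)) := by
    rw [Measure.prod_restrict]
    exact (hf.comp_add_prod.sub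
      (hf.comp_measurePreserving (measurePreserving_add_right μ u)).comp_fst).restrict
  have hp0 : 0 < p := one_pos.trans_le hp
  have hbound : ∀ᵐ y ∂μ.restrict B, ∫⁻ x in A, ‖f (x + y) - f (x + u)‖ₑ ^ p ∂μ ≤ ε ^ p := by
    refine ae_restrict_of_forall_mem hB fun y hy => ?_
    calc ∫⁻ x in A, ‖f (x + y) - f (x + u)‖ₑ ^ p ∂μ
        ≤ ∫⁻ x, ‖f (x + y) - f (x + u)‖ₑ ^ p ∂μ := setLIntegral_le_lintegral _ _
      _ = eLpNorm (fun x => f (x + y) - f (x + u)) (ENNReal.ofReal p) μ ^ p := by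
        rw [eLpNorm_eq_eLpNorm' (by simpa using hp0) ENNReal.ofReal_ne_top,
          ENNReal.toReal_ofReal hp0.le, lintegral_rpow_enorm_eq_rpow_eLpNorm' hp0]
      _ ≤ ε ^ p := by
        rw [eLpNorm_comp_add_right_sub_comp_add_right hf]
        gcongr
        exact hε y hy
  simpa using lintegral_enorm_integral_rpow_le_of_ae_le hF hp hbound

end TranslationDifference

end MeasureTheory

/- For `b < a` the integral is nonpositive, where `Real.rpow` takes junk values;
`|x ^ y| ≤ |x| ^ y` handles both orientations. -/
theorem rpow_intervalIntegral_norm_rpow_le {E : Type*} [NormedAddCommGroup E] {g : ℝ → E}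
    {a b p C : ℝ} (hp : 0 < p) (hC : 0 ≤ C)
    (h : ∫⁻ x in Ι a b, ‖g x‖ₑ ^ p ≤ ENNReal.ofReal C ^ p) :
    (∫ x in a..b, ‖g x‖ ^ p) ^ (1 / p) ≤ C := by
  have hI : |∫ x in a..b, ‖g x‖ ^ p| ≤ C ^ p := by
    rw [← ENNReal.ofReal_le_ofReal_iff (by positivity), ← ENNReal.ofReal_rpow_of_nonneg hC hp.le,
      ← Real.norm_eq_abs, intervalIntegral.norm_intervalIntegral_eq, ofReal_norm]
    refine (enorm_integral_le_lintegral_enorm _).trans (le_of_eq_of_le ?_ h)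
    simp_rw [Real.enorm_rpow_of_nonneg (norm_nonneg _) hp.le, enorm_norm]
  calc (∫ x in a..b, ‖g x‖ ^ p) ^ (1 / p)
      ≤ |∫ x in a..b, ‖g x‖ ^ p| ^ (1 / p) := (le_abs_self _).trans (Real.abs_rpow_le_abs_rpow _ _)
    _ ≤ (C ^ p) ^ (1 / p) := by gcongr
    _ = C := by rw [← Real.rpow_mul hC, mul_one_div_cancel hp.ne', Real.rpow_one]

theorem stmt16_general (N : ℕ) (p : ℝ) (hp : 1 ≤ p)
    (f : ℝ → Vec N) (hf : MemLp f (ENNReal.ofReal p) (volume : Measure ℝ))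
    (a b : ℝ) :
    ∀ ε > 0, ∃ δ > 0, ∀ s t u : ℝ, |t - s| ≤ δ → u ∈ Set.uIcc s t →
      (∫ x in a..b, ‖∫ y in s..t, (f (x + y) - f (x + u))‖ ^ p) ^ (1 / p) ≤ ε * |t - s| := by
  intro ε hε
  have : Fact (1 ≤ ENNReal.ofReal p) := ⟨by simpa using hp⟩
  obtain ⟨δ, hδ, hsmall⟩ : ∃ δ > 0, ∀ w ∈ Metric.closedBall 0 δ,
      eLpNorm (fun x => f (x + w) - f x) (ENNReal.ofReal p) volume ≤ ENNReal.ofReal ε :=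
    Metric.nhds_basis_closedBall.eventually_iff.1 <|
      (hf.tendsto_eLpNorm_comp_add_right_sub ENNReal.ofReal_ne_top).eventually
        (Iic_mem_nhds (by simpa using hε))
  refine ⟨δ, hδ, fun s t u hst hu => ?_⟩
  refine rpow_intervalIntegral_norm_rpow_le (by linarith) (by positivity) ?_
  have hclose (y : ℝ) (hy : y ∈ Ι s t) : y - u ∈ Metric.closedBall 0 δ := by
    rw [mem_closedBall_zero_iff, Real.norm_eq_abs]
    exact (abs_sub_le_of_uIcc_subset_uIcc (uIcc_subset_uIcc hu (uIoc_subset_uIcc hy))).trans hst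
  calc ∫⁻ x in Ι a b, ‖∫ y in s..t, (f (x + y) - f (x + u))‖ₑ ^ p
      = ∫⁻ x in Ι a b, ‖∫ y in Ι s t, (f (x + y) - f (x + u))‖ₑ ^ p := by
        simp_rw [← ofReal_norm, intervalIntegral.norm_intervalIntegral_eq]
    _ ≤ (volume (Ι s t) * ENNReal.ofReal ε) ^ p :=
        lintegral_enorm_setIntegral_sub_comp_add_rpow_le hf.1 hp _ measurableSet_uIoc u
          fun y hy => hsmall _ (hclose y hy)
    _ = ENNReal.ofReal (ε * |t - s|) ^ p := by
        rw [Real.volume_uIoc, ← ENNReal.ofReal_mul (abs_nonneg _), mul_comm]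

/-- for `1 ≤ p < ∞` and `f ∈ L^p(ℝ,ℝ^N)`,
`(∫_a^b ‖∫_s^t (f(x+y) − f(x+u)) dy‖^p dx)^{1/p} = o(|t−s|)` as `|t−s| → 0`, uniformly in `u`
between `s` and `t`. -/
theorem stmt16 (N : ℕ) (hN : 1 ≤ N) (p : ℝ) (hp : 1 ≤ p)
    (f : ℝ → Vec N) (hf : MemLp f (ENNReal.ofReal p) (volume : Measure ℝ))
    (a b : ℝ) (hab : a < b) :
    ∀ ε > 0, ∃ δ > 0, ∀ s t u : ℝ, |t - s| ≤ δ → u ∈ Set.uIcc s t →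
      (∫ x in a..b, ‖∫ y in s..t, (f (x + y) - f (x + u))‖ ^ p) ^ (1 / p) ≤ ε * |t - s| :=
  stmt16_general N p hp f hf a b
end
end

section
/- Let 1 ≤ p < ∞, N ≥ 1 an integer, a < b and c, d ≥ 0 real numbers, and f ∈ W^{1,p}([a−c, b+d],ℝ^N) with almost-everywhere derivative f'. Then (∫_a^b |f(x+t) − f(x+s) − (t−s) f'(x+u)|^p dx)^{1/p} = o(|t−s|) as |t−s| → 0 with s, t, u ∈ [−c,d], uniformly in u between s and t: for every ε > 0 there exists δ > 0 such that for all s, t, u ∈ [−c,d] with |t−s| ≤ δ and u between s and t, (∫_a^b |f(x+t) − f(x+s) − (t−s) f'(x+u)|^p dx)^{1/p} ≤ ε|t−s|. -/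
open MeasureTheory Set ENNReal

noncomputable section

/-- Bridge between lintegral of `‖·‖₊ ^ p` and `eLpNorm`. -/
lemma lint_eq_eLpNorm_rpow {α : Type*} [MeasurableSpace α] (μ : Measure α) {N : ℕ}
    {p : ℝ} (hp : 0 < p) (F : α → Vec N) :
    ∫⁻ x, (‖F x‖₊ : ℝ≥0∞) ^ p ∂μ = (eLpNorm F (ENNReal.ofReal p) μ) ^ p := by
  have h0 : ENNReal.ofReal p ≠ 0 := by
    simp only [ne_eq, ENNReal.ofReal_eq_zero, not_le]; exact hp
  rw [eLpNorm_eq_lintegral_rpow_enorm_toReal h0 ENNReal.ofReal_ne_top,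
    ENNReal.toReal_ofReal hp.le, one_div, ENNReal.rpow_inv_rpow hp.ne']
  rfl

/-- Continuity of translation in `L^q(ℝ)`. -/
lemma translation_cont {N : ℕ} {q : ℝ≥0∞} (hq1 : 1 ≤ q) (hqt : q ≠ ⊤)
    {g : ℝ → Vec N} (hgm : StronglyMeasurable g) (hg : MemLp g q volume)
    {ε : ℝ≥0∞} (hε : ε ≠ 0) (hεt : ε ≠ ⊤) :
    ∃ δ : ℝ, 0 < δ ∧ ∀ r : ℝ, |r| ≤ δ →
      eLpNorm (fun x => g (x + r) - g x) q volume ≤ ε := by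
  have hε3 : ε / 3 ≠ 0 := by
    simp [ENNReal.div_eq_zero_iff, hε]
  obtain ⟨h, h_supp, h_close, h_cont, h_mem⟩ :=
    hg.exists_hasCompactSupport_eLpNorm_sub_le hqt hε3
  obtain ⟨R₀, hRsub₀⟩ := h_supp.isBounded.subset_closedBall (0 : ℝ)
  set R : ℝ := max R₀ 0 with hRdef
  have hR0 : 0 ≤ R := le_max_right _ _
  have hRsub : tsupport h ⊆ Metric.closedBall 0 R :=
    hRsub₀.trans (Metric.closedBall_subset_closedBall (le_max_left _ _))
  set s : Set ℝ := Icc (-(R+1)) (R+1) with hs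
  have hsm : MeasurableSet s := measurableSet_Icc
  set M : ℝ≥0∞ := (volume s) ^ q.toReal⁻¹ with hM
  have hMt : M ≠ ⊤ := by
    apply ENNReal.rpow_ne_top_of_nonneg (by positivity)
    simp [hs, Real.volume_Icc]
  obtain ⟨e2, he2pos, he2⟩ : ∃ e2 : ℝ, 0 < e2 ∧ M * ENNReal.ofReal e2 ≤ ε / 3 := by
    rcases eq_or_ne M 0 with hM0 | hM0
    · exact ⟨1, one_pos, by simp [hM0]⟩
    · have hdiv0 : (ε / 3) / M ≠ 0 := by
        simp [ENNReal.div_eq_zero_iff, hε3, hMt]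
      have hdivt : (ε / 3) / M ≠ ⊤ :=
        (ENNReal.div_lt_top (ENNReal.div_lt_top hεt (by norm_num)).ne hM0).ne
      refine ⟨((ε / 3) / M).toReal, ENNReal.toReal_pos hdiv0 hdivt, ?_⟩
      rw [ENNReal.ofReal_toReal hdivt, mul_comm]
      exact le_of_eq (ENNReal.div_mul_cancel hM0 hMt)
  have huc : UniformContinuous h := h_supp.uniformContinuous_of_continuous h_cont
  obtain ⟨δ₀, hδ₀, hδ⟩ := Metric.uniformContinuous_iff.mp huc e2 he2pos
  refine ⟨min (δ₀ / 2) 1, by positivity, fun r hr => ?_⟩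
  have hr1 : |r| ≤ 1 := le_trans hr (min_le_right _ _)
  have hrδ : |r| < δ₀ := lt_of_le_of_lt (le_trans hr (min_le_left _ _)) (by linarith)
  have hgsm : AEStronglyMeasurable g (volume : Measure ℝ) := hgm.aestronglyMeasurable
  have hhm : StronglyMeasurable h := h_cont.stronglyMeasurable
  have hA : AEStronglyMeasurable (fun x => (g - h) (x + r)) (volume : Measure ℝ) :=
    ((hgm.sub hhm).comp_measurable (measurable_add_const r)).aestronglyMeasurable
  have hB : AEStronglyMeasurable (fun x => h (x + r) - h x) (volume : Measure ℝ) :=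
    ((hhm.comp_measurable (measurable_add_const r)).sub hhm).aestronglyMeasurable
  have hC : AEStronglyMeasurable (fun x => h x - g x) (volume : Measure ℝ) :=
    (hhm.sub hgm).aestronglyMeasurable
  have h1 : eLpNorm (fun x => (g - h) (x + r)) q volume = eLpNorm (g - h) q volume := by
    have hco : (fun x => (g - h) (x + r)) = (g - h) ∘ (· + r) := rfl
    rw [hco, eLpNorm_comp_measurePreserving (hgsm.sub hhm.aestronglyMeasurable)
      (measurePreserving_add_right volume r)]
  have h3 : eLpNorm (fun x => h x - g x) q volume = eLpNorm (g - h) q volume := by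
    have hco : (fun x => h x - g x) = h - g := rfl
    rw [hco, eLpNorm_sub_comm]
  have h2 : eLpNorm (fun x => h (x + r) - h x) q volume ≤ M * ENNReal.ofReal e2 := by
    have hzero : ∀ x : ℝ, x ∉ s → h (x + r) - h x = 0 := by
      intro x hx
      have hxabs : R + 1 < |x| := by
        simp only [hs, Set.mem_Icc, not_and_or, not_le] at hx
        rcases hx with hx | hx
        · rw [abs_of_neg (by linarith [hR0] : x < 0)]; linarith
        · rw [abs_of_pos (by linarith [hR0] : 0 < x)]; linarith
      have hx1 : h x = 0 := by
        apply image_eq_zero_of_notMem_tsupport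
        intro hmem
        have := hRsub hmem
        rw [Metric.mem_closedBall, Real.dist_eq, sub_zero] at this
        linarith
      have hx2 : h (x + r) = 0 := by
        apply image_eq_zero_of_notMem_tsupport
        intro hmem
        have := hRsub hmem
        rw [Metric.mem_closedBall, Real.dist_eq, sub_zero] at this
        have habs : |x| - |r| ≤ |x + r| := by
          have := abs_sub_abs_le_abs_sub x (-r)
          simp only [sub_neg_eq_add, abs_neg] at this
          linarith [this]
        linarith
      rw [hx1, hx2, sub_zero]
    have hind : (fun x => h (x + r) - h x) = s.indicator (fun x => h (x + r) - h x) := by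
      funext x
      by_cases hx : x ∈ s
      · rw [Set.indicator_of_mem hx]
      · rw [Set.indicator_of_notMem hx, hzero x hx]
    rw [hind, eLpNorm_indicator_eq_eLpNorm_restrict hsm]
    refine le_trans (eLpNorm_le_of_ae_bound (C := e2) (ae_of_all _ fun x => ?_)) ?_
    · have hd : dist (x + r) x < δ₀ := by
        rw [Real.dist_eq]; simpa using hrδ
      have := hδ hd
      rw [dist_eq_norm] at this
      exact this.le
    · rw [Measure.restrict_apply_univ]
  calc eLpNorm (fun x => g (x + r) - g x) q volume
      = eLpNorm ((fun x => (g - h) (x + r)) +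
          ((fun x => h (x + r) - h x) + fun x => h x - g x)) q volume := by
        congr 1
        funext x
        simp only [Pi.add_apply, Pi.sub_apply]
        abel
    _ ≤ eLpNorm (fun x => (g - h) (x + r)) q volume +
          eLpNorm ((fun x => h (x + r) - h x) + fun x => h x - g x) q volume :=
        eLpNorm_add_le hA (hB.add hC) hq1
    _ ≤ eLpNorm (fun x => (g - h) (x + r)) q volume +
          (eLpNorm (fun x => h (x + r) - h x) q volume +
            eLpNorm (fun x => h x - g x) q volume) := by
        gcongr
        exact eLpNorm_add_le hB hC hq1
    _ ≤ ε / 3 + (ε / 3 + ε / 3) := by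
        rw [h1, h3]
        gcongr <;> first
          | exact h_close
          | exact le_trans h2 he2
    _ = ε := by rw [← add_assoc, ENNReal.add_thirds]

/-- Uniform smallness of shifts in `L^p`. -/
lemma shift_est {N : ℕ} {p : ℝ} (hp : 1 ≤ p) {g : ℝ → Vec N} (hgm : StronglyMeasurable g)
    (hg : MemLp g (ENNReal.ofReal p) volume) {ε : ℝ} (hε : 0 < ε) :
    ∃ δ : ℝ, 0 < δ ∧ ∀ v u : ℝ, |v - u| ≤ δ →
      ∫⁻ x, (‖g (x + v) - g (x + u)‖₊ : ℝ≥0∞) ^ p ≤ (ENNReal.ofReal ε) ^ p := by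
  have hp0 : (0:ℝ) < p := lt_of_lt_of_le one_pos hp
  have hq1 : (1:ℝ≥0∞) ≤ ENNReal.ofReal p := by
    rw [← ENNReal.ofReal_one]; exact ENNReal.ofReal_le_ofReal hp
  obtain ⟨δ, hδ0, hδ⟩ := translation_cont hq1 ENNReal.ofReal_ne_top hgm hg
    (ε := ENNReal.ofReal ε) (by simp [hε, hε.le]) ENNReal.ofReal_ne_top
  refine ⟨δ, hδ0, fun v u hvu => ?_⟩
  have key : eLpNorm (fun x => g (x + v) - g (x + u)) (ENNReal.ofReal p) volume
      ≤ ENNReal.ofReal ε := by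
    have hco : (fun x => g (x + v) - g (x + u))
        = (fun y => g (y + (v - u)) - g y) ∘ (· + u) := by
      funext x
      simp only [Function.comp_apply]
      rw [show x + u + (v - u) = x + v by ring]
    rw [hco]
    have hmeas : AEStronglyMeasurable (fun y => g (y + (v - u)) - g y) (volume : Measure ℝ) :=
      ((hgm.comp_measurable (measurable_add_const (v - u))).sub hgm).aestronglyMeasurable
    rw [eLpNorm_comp_measurePreserving hmeas (measurePreserving_add_right volume u)]
    exact hδ (v - u) hvu
  calc ∫⁻ x, (‖g (x + v) - g (x + u)‖₊ : ℝ≥0∞) ^ p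
      = (eLpNorm (fun x => g (x + v) - g (x + u)) (ENNReal.ofReal p) volume) ^ p :=
        lint_eq_eLpNorm_rpow volume hp0 _
    _ ≤ (ENNReal.ofReal ε) ^ p := ENNReal.rpow_le_rpow key hp0.le

set_option maxHeartbeats 1000000 in
/-- for `1 ≤ p < ∞`, `a < b`, `c, d ≥ 0` and `f ∈ W^{1,p}([a−c,b+d],ℝ^N)` with
almost-everywhere derivative `f'`,
`(∫_a^b ‖f(x+t) − f(x+s) − (t−s)f'(x+u)‖^p dx)^{1/p} = o(|t−s|)` as `|t−s| → 0` with
`s, t, u ∈ [−c,d]`, uniformly in `u` between `s` and `t`. -/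
theorem stmt17 (N : ℕ) (hN : 1 ≤ N) (p : ℝ) (hp : 1 ≤ p)
    (a b c d : ℝ) (hab : a < b) (hc : 0 ≤ c) (hd : 0 ≤ d)
    (f f' : ℝ → Vec N) (hf : HasW1pOn f f' p (a - c) (b + d)) :
    ∀ ε > 0, ∃ δ > 0, ∀ s ∈ Set.Icc (-c) d, ∀ t ∈ Set.Icc (-c) d, ∀ u ∈ Set.Icc (-c) d,
      |t - s| ≤ δ → u ∈ Set.uIcc s t →
      (∫ x in a..b, ‖f (x + t) - f (x + s) - (t - s) • f' (x + u)‖ ^ p) ^ (1 / p) ≤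
        ε * |t - s| := by
  intro ε hε
  have hp0 : (0:ℝ) < p := lt_of_lt_of_le one_pos hp
  have hq0 : ENNReal.ofReal p ≠ 0 := by
    simp only [ne_eq, ENNReal.ofReal_eq_zero, not_le]; exact hp0
  have hq1 : (1:ℝ≥0∞) ≤ ENNReal.ofReal p := by
    rw [← ENNReal.ofReal_one]; exact ENNReal.ofReal_le_ofReal hp
  have hAB : a - c ≤ b + d := by linarith
  obtain ⟨hFTC, hInt, hLp⟩ := hf
  -- measurable version of f'
  set g0 : ℝ → Vec N := hLp.aestronglyMeasurable.mk f' with hg0def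
  have hg0m : StronglyMeasurable g0 := hLp.aestronglyMeasurable.stronglyMeasurable_mk
  set g : ℝ → Vec N := (Set.Icc (a - c) (b + d)).indicator g0 with hgdef
  have hgm : StronglyMeasurable g := hg0m.indicator measurableSet_Icc
  have hfg : f' =ᵐ[volume.restrict (Set.Icc (a - c) (b + d))] g := by
    refine hLp.aestronglyMeasurable.ae_eq_mk.trans ?_
    filter_upwards [ae_restrict_mem measurableSet_Icc] with y hy
    rw [hgdef]
    exact (Set.indicator_of_mem hy g0).symm
  have hD : ∀ᵐ y ∂(volume : Measure ℝ), y ∈ Set.Icc (a - c) (b + d) → f' y = g y :=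
    ae_imp_of_ae_restrict hfg
  -- g ∈ Lp globally
  have hgLp : MemLp g (ENNReal.ofReal p) volume := by
    refine ⟨hgm.aestronglyMeasurable, ?_⟩
    rw [hgdef, eLpNorm_indicator_eq_eLpNorm_restrict measurableSet_Icc]
    have := eLpNorm_congr_ae (μ := volume.restrict (Set.Icc (a - c) (b + d)))
      (p := ENNReal.ofReal p) hLp.aestronglyMeasurable.ae_eq_mk
    rw [← this]
    exact hLp.2
  -- g is interval integrable on every interval
  have hgInt : ∀ α β : ℝ, IntervalIntegrable g volume α β := by
    intro α β
    rw [intervalIntegrable_iff]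
    haveI : IsFiniteMeasure (volume.restrict (Set.uIoc α β)) := by
      constructor
      rw [Measure.restrict_apply_univ]
      exact lt_of_le_of_lt (measure_mono Set.uIoc_subset_uIcc) measure_Icc_lt_top
    exact memLp_one_iff_integrable.mp ((hgLp.restrict _).mono_exponent hq1)
  obtain ⟨δ, hδ0, hδ⟩ := shift_est hp hgm hgLp hε
  refine ⟨δ, hδ0, fun s hs t ht u hu hts huIcc => ?_⟩
  rcases eq_or_ne t s with hts_eq | hts_ne
  · subst hts_eq
    have h0 : (∫ x in a..b, ‖f (x + t) - f (x + t) - (t - t) • f' (x + u)‖ ^ p) = 0 := by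
      simp [Real.zero_rpow hp0.ne']
    rw [h0, sub_self, abs_zero, mul_zero, Real.zero_rpow (one_div_ne_zero hp0.ne')]
  set k : ℝ := t - s with hk
  have hk0 : k ≠ 0 := sub_ne_zero.mpr hts_ne
  have hmem : ∀ x ∈ Set.Ioc a b, ∀ r ∈ Set.Icc (-c) d, x + r ∈ Set.Icc (a - c) (b + d) := by
    intro x hx r hr
    exact ⟨by linarith [hx.1, hr.1], by linarith [hx.2, hr.2]⟩
  set w : ℝ → Vec N :=
    fun x => k • ∫ τ in (0:ℝ)..1, (g (k * τ + (x + s)) - g (x + u)) with hw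
  -- Claim A : a.e. equality with w on Ioc a b
  have hae : ∀ᵐ x ∂(volume.restrict (Set.Ioc a b)),
      f (x + t) - f (x + s) - k • f' (x + u) = w x := by
    have hDu : ∀ᵐ x ∂(volume : Measure ℝ),
        (x + u ∈ Set.Icc (a - c) (b + d) → f' (x + u) = g (x + u)) :=
      (measurePreserving_add_right volume u).quasiMeasurePreserving.ae hD
    filter_upwards [ae_restrict_mem measurableSet_Ioc, ae_restrict_of_ae hDu] with x hx hxu
    have hxt : x + t ∈ Set.Icc (a - c) (b + d) := hmem x hx t ht
    have hxs : x + s ∈ Set.Icc (a - c) (b + d) := hmem x hx s hs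
    have hxu' : f' (x + u) = g (x + u) := hxu (hmem x hx u hu)
    have hI1 : IntervalIntegrable f' volume (a - c) (x + t) :=
      hInt.mono_set (Set.uIcc_subset_uIcc Set.left_mem_uIcc
        (by rw [Set.uIcc_of_le hAB]; exact hxt))
    have hI2 : IntervalIntegrable f' volume (a - c) (x + s) :=
      hInt.mono_set (Set.uIcc_subset_uIcc Set.left_mem_uIcc
        (by rw [Set.uIcc_of_le hAB]; exact hxs))
    have e1 : f (x + t) - f (x + s) = ∫ y in (x + s)..(x + t), f' y := by
      rw [hFTC (x + t) hxt, hFTC (x + s) hxs, add_sub_add_left_eq_sub]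
      exact intervalIntegral.integral_interval_sub_left hI1 hI2
    have e2 : (∫ y in (x + s)..(x + t), f' y) = ∫ y in (x + s)..(x + t), g y := by
      apply intervalIntegral.integral_congr_ae
      filter_upwards [hD] with y hy hymem
      apply hy
      have h1 : a - c ≤ min (x + s) (x + t) :=
        le_min (by linarith [hx.1, hs.1]) (by linarith [hx.1, ht.1])
      have h2 : max (x + s) (x + t) ≤ b + d :=
        max_le (by linarith [hx.2, hs.2]) (by linarith [hx.2, ht.2])
      obtain ⟨hy1, hy2⟩ := hymem
      exact ⟨by linarith [hy1], by linarith [hy2]⟩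
    have e5 : (∫ y in (x + s)..(x + t), (g y - g (x + u))) = w x := by
      have hcv := intervalIntegral.integral_comp_mul_add
        (a := (0:ℝ)) (b := 1) (f := fun y => g y - g (x + u)) hk0 (x + s)
      simp only [mul_zero, zero_add, mul_one] at hcv
      have hep : k + (x + s) = x + t := by rw [hk]; ring
      rw [hep] at hcv
      show _ = k • ∫ τ in (0:ℝ)..1, (g (k * τ + (x + s)) - g (x + u))
      rw [hcv, smul_smul, mul_inv_cancel₀ hk0, one_smul]
    calc f (x + t) - f (x + s) - k • f' (x + u)
        = (∫ y in (x + s)..(x + t), f' y) - k • f' (x + u) := by rw [e1]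
      _ = (∫ y in (x + s)..(x + t), g y) - k • g (x + u) := by rw [e2, hxu']
      _ = ∫ y in (x + s)..(x + t), (g y - g (x + u)) := by
          rw [intervalIntegral.integral_sub (hgInt _ _) intervalIntegrable_const,
            intervalIntegral.integral_const,
            show x + t - (x + s) = k by rw [hk]; ring]
      _ = w x := e5
  -- Claim B : pointwise bound via Jensen
  have hBnd : ∀ x : ℝ, (‖w x‖₊ : ℝ≥0∞) ^ p
      ≤ (ENNReal.ofReal |k|) ^ p *
        ∫⁻ τ in Set.Ioc (0:ℝ) 1, (‖g (k * τ + (x + s)) - g (x + u)‖₊ : ℝ≥0∞) ^ p := by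
    intro x
    haveI : IsProbabilityMeasure (volume.restrict (Set.Ioc (0:ℝ) 1)) := by
      constructor
      rw [Measure.restrict_apply_univ, Real.volume_Ioc]
      norm_num
    have hXm : AEStronglyMeasurable (fun τ : ℝ => g (k * τ + (x + s)) - g (x + u))
        (volume.restrict (Set.Ioc (0:ℝ) 1)) := by
      apply AEStronglyMeasurable.sub
      · exact (hgm.comp_measurable (by fun_prop)).aestronglyMeasurable
      · exact aestronglyMeasurable_const
    have h1 : (‖w x‖₊ : ℝ≥0∞) ≤ (ENNReal.ofReal |k|) *
        ∫⁻ τ in Set.Ioc (0:ℝ) 1, (‖g (k * τ + (x + s)) - g (x + u)‖₊ : ℝ≥0∞) := by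
      rw [hw]
      have hsm : (‖k • ∫ τ in (0:ℝ)..1, (g (k * τ + (x + s)) - g (x + u))‖₊ : ℝ≥0∞)
          = (ENNReal.ofReal |k|) *
            (‖∫ τ in (0:ℝ)..1, (g (k * τ + (x + s)) - g (x + u))‖₊ : ℝ≥0∞) := by
        rw [nnnorm_smul, ENNReal.coe_mul]
        congr 1
        rw [← enorm_eq_nnnorm, ← ofReal_norm, Real.norm_eq_abs]
      rw [hsm]
      gcongr
      rw [intervalIntegral.integral_of_le (by norm_num : (0:ℝ) ≤ 1)]
      exact enorm_integral_le_lintegral_enorm _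
    have h3 : (∫⁻ τ in Set.Ioc (0:ℝ) 1, (‖g (k * τ + (x + s)) - g (x + u)‖₊ : ℝ≥0∞))
        ≤ (∫⁻ τ in Set.Ioc (0:ℝ) 1,
            (‖g (k * τ + (x + s)) - g (x + u)‖₊ : ℝ≥0∞) ^ p) ^ (1 / p) := by
      have hmono := eLpNorm_le_eLpNorm_of_exponent_le (p := 1) (q := ENNReal.ofReal p)
        hq1 hXm
      rw [eLpNorm_one_eq_lintegral_enorm,
        eLpNorm_eq_lintegral_rpow_enorm_toReal hq0 ENNReal.ofReal_ne_top,
        ENNReal.toReal_ofReal hp0.le] at hmono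
      exact hmono
    calc (‖w x‖₊ : ℝ≥0∞) ^ p
        ≤ ((ENNReal.ofReal |k|) *
            ∫⁻ τ in Set.Ioc (0:ℝ) 1, (‖g (k * τ + (x + s)) - g (x + u)‖₊ : ℝ≥0∞)) ^ p :=
          ENNReal.rpow_le_rpow h1 hp0.le
      _ ≤ ((ENNReal.ofReal |k|) * (∫⁻ τ in Set.Ioc (0:ℝ) 1,
            (‖g (k * τ + (x + s)) - g (x + u)‖₊ : ℝ≥0∞) ^ p) ^ (1 / p)) ^ p := by
          gcongr
      _ = (ENNReal.ofReal |k|) ^ p * ((∫⁻ τ in Set.Ioc (0:ℝ) 1,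
            (‖g (k * τ + (x + s)) - g (x + u)‖₊ : ℝ≥0∞) ^ p) ^ (1 / p)) ^ p :=
          ENNReal.mul_rpow_of_nonneg _ _ hp0.le
      _ = (ENNReal.ofReal |k|) ^ p * ∫⁻ τ in Set.Ioc (0:ℝ) 1,
            (‖g (k * τ + (x + s)) - g (x + u)‖₊ : ℝ≥0∞) ^ p := by
          rw [one_div, ENNReal.rpow_inv_rpow hp0.ne']
  -- Tonelli swap
  have hswap :
      (∫⁻ x in Set.Ioc a b, ∫⁻ τ in Set.Ioc (0:ℝ) 1,
        (‖g (k * τ + (x + s)) - g (x + u)‖₊ : ℝ≥0∞) ^ p)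
      = ∫⁻ τ in Set.Ioc (0:ℝ) 1, ∫⁻ x in Set.Ioc a b,
        (‖g (k * τ + (x + s)) - g (x + u)‖₊ : ℝ≥0∞) ^ p := by
    apply lintegral_lintegral_swap
    apply Measurable.aemeasurable
    have hgmeas : Measurable g := hgm.measurable
    have m1 : Measurable fun z : ℝ × ℝ => g (k * z.2 + (z.1 + s)) :=
      hgmeas.comp (by fun_prop)
    have m2 : Measurable fun z : ℝ × ℝ => g (z.1 + u) := hgmeas.comp (by fun_prop)
    exact ENNReal.continuous_rpow_const.measurable.comp
      ((m1.sub m2).nnnorm.coe_nnreal_ennreal)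
  -- the inner bound after swap
  have hinner : ∀ τ ∈ Set.Ioc (0:ℝ) 1,
      (∫⁻ x in Set.Ioc a b, (‖g (k * τ + (x + s)) - g (x + u)‖₊ : ℝ≥0∞) ^ p)
        ≤ (ENNReal.ofReal ε) ^ p := by
    intro τ hτ
    have hrw : (∫⁻ x in Set.Ioc a b, (‖g (k * τ + (x + s)) - g (x + u)‖₊ : ℝ≥0∞) ^ p)
        = ∫⁻ x in Set.Ioc a b, (‖g (x + (s + k * τ)) - g (x + u)‖₊ : ℝ≥0∞) ^ p := by
      apply lintegral_congr
      intro x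
      rw [show k * τ + (x + s) = x + (s + k * τ) by ring]
    rw [hrw]
    have hle : (∫⁻ x in Set.Ioc a b, (‖g (x + (s + k * τ)) - g (x + u)‖₊ : ℝ≥0∞) ^ p)
        ≤ ∫⁻ x, (‖g (x + (s + k * τ)) - g (x + u)‖₊ : ℝ≥0∞) ^ p :=
      lintegral_mono' Measure.restrict_le_self le_rfl
    refine le_trans hle (hδ (s + k * τ) u ?_)
    -- |s + k*τ - u| ≤ |t - s| ≤ δ
    have hu1 : min s t ≤ u := huIcc.1
    have hu2 : u ≤ max s t := huIcc.2
    have hv1 : min s t ≤ s + k * τ := by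
      rcases le_total s t with hst | hst
      · rw [min_eq_left hst]
        nlinarith [hτ.1.le, hτ.2, sub_nonneg.mpr hst]
      · rw [min_eq_right hst]
        nlinarith [hτ.1.le, hτ.2, sub_nonneg.mpr hst]
    have hv2 : s + k * τ ≤ max s t := by
      rcases le_total s t with hst | hst
      · rw [max_eq_right hst]
        nlinarith [hτ.1.le, hτ.2, sub_nonneg.mpr hst]
      · rw [max_eq_left hst]
        nlinarith [hτ.1.le, hτ.2, sub_nonneg.mpr hst]
    have heq : max s t - min s t = |t - s| := by
      rw [max_comm, min_comm, max_sub_min_eq_abs]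
      exact abs_sub_comm s t
    refine le_trans (abs_le.mpr ⟨by linarith, by linarith⟩) hts
  -- main chain
  set J : ℝ≥0∞ := ∫⁻ x in Set.Ioc a b,
    (‖f (x + t) - f (x + s) - k • f' (x + u)‖₊ : ℝ≥0∞) ^ p with hJ
  have hfinal : J ≤ ENNReal.ofReal ((ε * |k|) ^ p) := by
    have step1 : J = ∫⁻ x in Set.Ioc a b, (‖w x‖₊ : ℝ≥0∞) ^ p := by
      apply lintegral_congr_ae
      filter_upwards [hae] with x hx
      rw [hx]
    have hkp_ne_top : (ENNReal.ofReal |k|) ^ p ≠ ⊤ :=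
      (ENNReal.rpow_lt_top_of_nonneg hp0.le ENNReal.ofReal_ne_top).ne
    calc J = ∫⁻ x in Set.Ioc a b, (‖w x‖₊ : ℝ≥0∞) ^ p := step1
      _ ≤ ∫⁻ x in Set.Ioc a b, (ENNReal.ofReal |k|) ^ p *
            ∫⁻ τ in Set.Ioc (0:ℝ) 1, (‖g (k * τ + (x + s)) - g (x + u)‖₊ : ℝ≥0∞) ^ p :=
          lintegral_mono hBnd
      _ = (ENNReal.ofReal |k|) ^ p * ∫⁻ x in Set.Ioc a b,
            ∫⁻ τ in Set.Ioc (0:ℝ) 1, (‖g (k * τ + (x + s)) - g (x + u)‖₊ : ℝ≥0∞) ^ p :=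
          lintegral_const_mul' _ _ hkp_ne_top
      _ = (ENNReal.ofReal |k|) ^ p * ∫⁻ τ in Set.Ioc (0:ℝ) 1,
            ∫⁻ x in Set.Ioc a b, (‖g (k * τ + (x + s)) - g (x + u)‖₊ : ℝ≥0∞) ^ p := by
          rw [hswap]
      _ ≤ (ENNReal.ofReal |k|) ^ p * ∫⁻ _ in Set.Ioc (0:ℝ) 1, (ENNReal.ofReal ε) ^ p := by
          refine mul_le_mul_right (lintegral_mono_ae ?_) _
          filter_upwards [ae_restrict_mem measurableSet_Ioc] with τ hτ
          exact hinner τ hτ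
      _ = (ENNReal.ofReal |k|) ^ p * (ENNReal.ofReal ε) ^ p := by
          rw [lintegral_const, Measure.restrict_apply_univ, Real.volume_Ioc]
          norm_num
      _ = ENNReal.ofReal ((ε * |k|) ^ p) := by
          rw [← ENNReal.mul_rpow_of_nonneg _ _ hp0.le, ← ENNReal.ofReal_mul (abs_nonneg k),
            ← ENNReal.ofReal_rpow_of_nonneg (by positivity) hp0.le, mul_comm |k| ε]
  -- convert the Bochner integral
  have hwsm : StronglyMeasurable w := by
    have hin : StronglyMeasurable fun z : ℝ × ℝ => g (k * z.2 + (z.1 + s)) - g (z.1 + u) :=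
      (hgm.comp_measurable (by fun_prop)).sub (hgm.comp_measurable (by fun_prop))
    have hint : StronglyMeasurable fun x : ℝ =>
        ∫ τ, (g (k * τ + (x + s)) - g (x + u)) ∂(volume.restrict (Set.Ioc (0:ℝ) 1)) :=
      hin.integral_prod_right'
    have : w = fun x => k • ∫ τ, (g (k * τ + (x + s)) - g (x + u))
        ∂(volume.restrict (Set.Ioc (0:ℝ) 1)) := by
      funext x
      show k • ∫ τ in (0:ℝ)..1, (g (k * τ + (x + s)) - g (x + u)) = _
      rw [intervalIntegral.integral_of_le (by norm_num : (0:ℝ) ≤ 1)]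
    rw [this]
    exact hint.const_smul k
  have hASM : AEStronglyMeasurable
      (fun x => ‖f (x + t) - f (x + s) - k • f' (x + u)‖ ^ p)
      (volume.restrict (Set.Ioc a b)) := by
    have h1 : StronglyMeasurable fun x => ‖w x‖ ^ p :=
      (Real.continuous_rpow_const hp0.le).comp_stronglyMeasurable hwsm.norm
    apply h1.aestronglyMeasurable.congr
    filter_upwards [hae] with x hx
    rw [hx]
  have hconv : (∫ x in a..b, ‖f (x + t) - f (x + s) - k • f' (x + u)‖ ^ p) = J.toReal := by
    rw [intervalIntegral.integral_of_le hab.le,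
      integral_eq_lintegral_of_nonneg_ae (ae_of_all _ fun x => by positivity) hASM]
    congr 1
    apply lintegral_congr
    intro x
    rw [← enorm_eq_nnnorm, ← ofReal_norm,
      ← ENNReal.ofReal_rpow_of_nonneg (norm_nonneg _) hp0.le]
  rw [hconv]
  have htoReal : J.toReal ≤ (ε * |k|) ^ p :=
    ENNReal.toReal_le_of_le_ofReal (by positivity) hfinal
  calc J.toReal ^ (1 / p) ≤ ((ε * |k|) ^ p) ^ (1 / p) :=
        Real.rpow_le_rpow ENNReal.toReal_nonneg htoReal (by positivity)
    _ = ε * |k| := by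
        rw [one_div, Real.rpow_rpow_inv (by positivity) hp0.ne']

end
end

section
/- Let X be a Banach space, Λ a normed space, U ⊂ X an open subset, V ⊂ Λ a subset contained in the set of its own limit points, and T : U × V → X a map. Suppose there is a map g : V → U such that g(λ) is a fixed point of T(·,λ) for every λ ∈ V, and suppose the family {T(·,λ) : λ ∈ V} is a uniform contraction, i.e., there is c ∈ (0,1) with ‖T(x_1,λ) − T(x_2,λ)‖ ≤ c‖x_1 − x_2‖ for all x_1, x_2 ∈ U and λ ∈ V. If T is Fréchet differentiable (in the sense of differentiability within the set U × V, with partial derivatives D_1T and D_2T), then 1 − D_1T(g(λ),λ) is boundedly invertible for each λ ∈ V and, setting A_λ := [1 − D_1T(g(λ),λ)]^{-1} D_2T(g(λ),λ) ∈ 𝓛(Λ,X), one has for each λ_0 ∈ V that ‖g(λ) − g(λ_0) − A_{λ_0}(λ − λ_0)‖ = o(‖λ − λ_0‖) as ‖λ − λ_0‖ → 0 with λ ∈ V. -/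
open Set

/-- $C^1$-uniform contraction theorem: let `X` be a Banach space, `Λ` a normed
space, `U ⊂ X` open, `V ⊂ Λ` contained in the set of its own limit points, and `T : U × V → X`.
Suppose `g : V → U` picks a fixed point of `T(·,λ)` for every `λ ∈ V` and the family
`{T(·,λ)}_{λ∈V}` is a uniform contraction with constant `c ∈ (0,1)`.  If `T` is Fréchet
differentiable within `U × V` (with derivative `DT`, `D₁T = DT ∘ inl`, `D₂T = DT ∘ inr`), then
for every `λ₀ ∈ V` the operator `1 − D₁T(g(λ₀),λ₀)` has a bounded inverse `J` and, with
`A_{λ₀} := J ∘ D₂T(g(λ₀),λ₀)`, one has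
`‖g(λ) − g(λ₀) − A_{λ₀}(λ−λ₀)‖ = o(‖λ−λ₀‖)` as `λ → λ₀` in `V`. -/
theorem stmt18 {X Λ : Type*} [NormedAddCommGroup X] [NormedSpace ℝ X] [CompleteSpace X]
    [NormedAddCommGroup Λ] [NormedSpace ℝ Λ]
    (U : Set X) (hU : IsOpen U) (V : Set Λ) (hV : ∀ l ∈ V, l ∈ closure (V \ {l}))
    (T : X → Λ → X) (g : Λ → X) (hgU : ∀ l ∈ V, g l ∈ U) (hfix : ∀ l ∈ V, T (g l) l = g l)
    (c : ℝ) (hc0 : 0 < c) (hc1 : c < 1)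
    (hcontr : ∀ l ∈ V, ∀ x₁ ∈ U, ∀ x₂ ∈ U, ‖T x₁ l - T x₂ l‖ ≤ c * ‖x₁ - x₂‖)
    (DT : X → Λ → (X × Λ →L[ℝ] X))
    (hDT : ∀ x₀ ∈ U, ∀ l₀ ∈ V, ∀ ε > 0, ∃ δ > 0, ∀ x ∈ U, ∀ l ∈ V,
      ‖x - x₀‖ + ‖l - l₀‖ ≤ δ →
      ‖T x l - T x₀ l₀ - DT x₀ l₀ (x - x₀, l - l₀)‖ ≤ ε * (‖x - x₀‖ + ‖l - l₀‖)) :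
    ∀ l₀ ∈ V, ∃ J : X →L[ℝ] X,
      J.comp (ContinuousLinearMap.id ℝ X -
          (DT (g l₀) l₀).comp (ContinuousLinearMap.inl ℝ X Λ)) =
        ContinuousLinearMap.id ℝ X ∧
      (ContinuousLinearMap.id ℝ X -
          (DT (g l₀) l₀).comp (ContinuousLinearMap.inl ℝ X Λ)).comp J =
        ContinuousLinearMap.id ℝ X ∧
      ∀ ε > 0, ∃ δ > 0, ∀ l ∈ V, ‖l - l₀‖ ≤ δ →
        ‖g l - g l₀ -
            (J.comp ((DT (g l₀) l₀).comp (ContinuousLinearMap.inr ℝ X Λ))) (l - l₀)‖ ≤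
          ε * ‖l - l₀‖ := by
  intro l₀ hl₀
  have hx₀U : g l₀ ∈ U := hgU l₀ hl₀
  set x₀ := g l₀ with hx₀def
  set B : X →L[ℝ] X := (DT x₀ l₀).comp (ContinuousLinearMap.inl ℝ X Λ) with hBdef
  set C : Λ →L[ℝ] X := (DT x₀ l₀).comp (ContinuousLinearMap.inr ℝ X Λ) with hCdef
  -- ‖B‖ ≤ c
  have hBnorm : ‖B‖ ≤ c := by
    refine ContinuousLinearMap.opNorm_le_bound _ hc0.le fun v => ?_
    by_cases hv : v = 0
    · simp [hv]
    have hvpos : 0 < ‖v‖ := norm_pos_iff.mpr hv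
    have key : ∀ ε > 0, ‖B v‖ ≤ c * ‖v‖ + ε := by
      intro ε hε
      have hε' : 0 < ε / ‖v‖ := div_pos hε hvpos
      obtain ⟨δ, hδ, hd⟩ := hDT x₀ hx₀U l₀ hl₀ (ε / ‖v‖) hε'
      obtain ⟨r, hr, hball⟩ := Metric.isOpen_iff.mp hU x₀ hx₀U
      set s := min (δ / ‖v‖) (r / (2 * ‖v‖)) with hs
      have hspos : 0 < s := lt_min (div_pos hδ hvpos) (by positivity)
      set x := x₀ + s • v with hxdef
      have hxx₀ : x - x₀ = s • v := by rw [hxdef]; abel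
      have hnorm_xx : ‖x - x₀‖ = s * ‖v‖ := by
        rw [hxx₀, norm_smul, Real.norm_of_nonneg hspos.le]
      have hxU : x ∈ U := by
        apply hball
        rw [Metric.mem_ball, dist_eq_norm, hxx₀, norm_smul, Real.norm_of_nonneg hspos.le]
        calc s * ‖v‖ ≤ (r / (2 * ‖v‖)) * ‖v‖ :=
              mul_le_mul_of_nonneg_right (min_le_right _ _) hvpos.le
          _ = r / 2 := by field_simp
          _ < r := by linarith
      have hle : ‖x - x₀‖ + ‖l₀ - l₀‖ ≤ δ := by
        rw [sub_self, norm_zero, add_zero, hnorm_xx]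
        calc s * ‖v‖ ≤ (δ / ‖v‖) * ‖v‖ :=
              mul_le_mul_of_nonneg_right (min_le_left _ _) hvpos.le
          _ = δ := by field_simp
      have h1 := hd x hxU l₀ hl₀ hle
      have h2 := hcontr l₀ hl₀ x hxU x₀ hx₀U
      have hDTapp : DT x₀ l₀ (x - x₀, l₀ - l₀) = s • B v := by
        rw [hxx₀, sub_self, hBdef]
        have hpr : ((s • v : X), (0 : Λ)) = s • ((v : X), (0 : Λ)) := by simp
        simp only [ContinuousLinearMap.comp_apply, ContinuousLinearMap.inl_apply]
        rw [hpr, map_smul]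
      rw [hDTapp, sub_self, norm_zero, add_zero, hnorm_xx] at h1
      have h3 : ‖s • B v‖ ≤ ‖T x l₀ - T x₀ l₀‖ + ε / ‖v‖ * (s * ‖v‖) := by
        have := norm_sub_norm_le (T x l₀ - T x₀ l₀) (s • B v)
        have h4 : ‖T x l₀ - T x₀ l₀ - s • B v‖ ≤ ε / ‖v‖ * (s * ‖v‖) := h1
        linarith [norm_sub_norm_le (s • B v) (T x l₀ - T x₀ l₀),
          norm_sub_rev (T x l₀ - T x₀ l₀) (s • B v) ▸ h4]
      rw [hnorm_xx] at h2
      rw [norm_smul, Real.norm_of_nonneg hspos.le] at h3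
      have h5 : s * ‖B v‖ ≤ s * (c * ‖v‖ + ε) := by
        have : ε / ‖v‖ * (s * ‖v‖) = s * ε := by field_simp
        rw [this] at h3
        nlinarith
      exact le_of_mul_le_mul_left (by linarith [h5]) hspos
    exact le_of_forall_pos_le_add key
  have hB1 : ‖B‖ < 1 := lt_of_le_of_lt hBnorm hc1
  obtain ⟨J, hJ1, hJ2⟩ :
      ∃ J : X →L[ℝ] X,
        J.comp (ContinuousLinearMap.id ℝ X - B) = ContinuousLinearMap.id ℝ X ∧
        (ContinuousLinearMap.id ℝ X - B).comp J = ContinuousLinearMap.id ℝ X := by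
    refine ⟨(↑(Units.oneSub B hB1)⁻¹ : X →L[ℝ] X), ?_, ?_⟩
    · rw [← ContinuousLinearMap.one_def, ← ContinuousLinearMap.mul_def]
      exact (Units.oneSub B hB1).inv_mul
    · rw [← ContinuousLinearMap.one_def, ← ContinuousLinearMap.mul_def]
      exact (Units.oneSub B hB1).mul_inv
  refine ⟨J, hJ1, hJ2, ?_⟩
  · have hJcomp : J.comp ((1 : X →L[ℝ] X) - B) = 1 := by
      rw [ContinuousLinearMap.one_def]; exact hJ1
    intro ε hε
    set M : ℝ := ‖C‖ + 1 with hM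
    have hM1 : 1 ≤ M := by have := norm_nonneg C; rw [hM]; linarith
    set K : ℝ := M / (1 - c) with hK
    have hKpos : 0 < K := div_pos (by positivity) (by linarith)
    set ε₁ : ℝ := min (ε / ((‖J‖ + 1) * (K + 1))) 1 with hε₁
    have hε₁pos : 0 < ε₁ := lt_min (by positivity) one_pos
    obtain ⟨δ₁, hδ₁, hd⟩ := hDT x₀ hx₀U l₀ hl₀ ε₁ hε₁pos
    refine ⟨δ₁ / (K + 1), by positivity, fun l hl hld => ?_⟩
    set h := l - l₀ with hh
    set Δ := g l - g l₀ with hΔ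
    have hK1 : (1 : ℝ) ≤ K + 1 := by linarith
    have hldδ₁ : ‖h‖ ≤ δ₁ := hld.trans (div_le_self hδ₁.le hK1)
    -- Lipschitz bound on g
    have hlip : ‖Δ‖ ≤ K * ‖h‖ := by
      have h1 := hd x₀ hx₀U l hl (by rw [sub_self, norm_zero, zero_add]; exact hldδ₁)
      rw [sub_self, norm_zero, zero_add] at h1
      have hDTapp : DT x₀ l₀ (0, l - l₀) = C h := by
        rw [hCdef]; simp [ContinuousLinearMap.comp_apply, hh]
      rw [hDTapp] at h1
      have h2 : ‖T x₀ l - T x₀ l₀‖ ≤ ‖C h‖ + ε₁ * ‖h‖ := by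
        have := norm_sub_norm_le (T x₀ l - T x₀ l₀) (C h)
        linarith [norm_le_insert' (T x₀ l - T x₀ l₀) (C h)]
      have hCh : ‖C h‖ ≤ ‖C‖ * ‖h‖ := C.le_opNorm h
      have hfixl₀ : T x₀ l₀ = x₀ := hfix l₀ hl₀
      have hε₁le1 : ε₁ ≤ 1 := by rw [hε₁]; exact min_le_right _ _
      have h3 : ‖T x₀ l - x₀‖ ≤ M * ‖h‖ := by
        calc ‖T x₀ l - x₀‖ = ‖T x₀ l - T x₀ l₀‖ := by rw [hfixl₀]
          _ ≤ ‖C h‖ + ε₁ * ‖h‖ := h2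
          _ ≤ ‖C‖ * ‖h‖ + 1 * ‖h‖ :=
            add_le_add hCh (mul_le_mul_of_nonneg_right hε₁le1 (norm_nonneg _))
          _ = M * ‖h‖ := by rw [hM]; ring
      have h4 : ‖g l - x₀‖ ≤ c * ‖g l - x₀‖ + M * ‖h‖ := by
        calc ‖g l - x₀‖ = ‖T (g l) l - x₀‖ := by rw [hfix l hl]
          _ ≤ ‖T (g l) l - T x₀ l‖ + ‖T x₀ l - x₀‖ := norm_sub_le_norm_sub_add_norm_sub _ _ _
          _ ≤ c * ‖g l - x₀‖ + M * ‖h‖ :=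
            add_le_add (hcontr l hl (g l) (hgU l hl) x₀ hx₀U) h3
      have h5 : (1 - c) * ‖g l - x₀‖ ≤ M * ‖h‖ := by linarith
      have hΔeq : Δ = g l - x₀ := by rw [hΔ, hx₀def]
      rw [hΔeq, hK, div_mul_eq_mul_div, le_div_iff₀ (by linarith),
        mul_comm (‖g l - x₀‖) (1 - c)]
      exact h5
    -- main estimate
    have hsum : ‖Δ‖ + ‖h‖ ≤ δ₁ := by
      calc ‖Δ‖ + ‖h‖ ≤ K * ‖h‖ + ‖h‖ := by linarith
        _ = (K + 1) * ‖h‖ := by ring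
        _ ≤ (K + 1) * (δ₁ / (K + 1)) := by
            exact mul_le_mul_of_nonneg_left hld (by positivity)
        _ = δ₁ := by field_simp
    have h1 := hd (g l) (hgU l hl) l hl hsum
    have hDTapp : DT x₀ l₀ (g l - x₀, l - l₀) = B Δ + C h := by
      have : ((g l - x₀ : X), (l - l₀ : Λ)) = (g l - x₀, 0) + (0, l - l₀) := by
        simp
      rw [this, map_add, hBdef, hCdef]
      simp [ContinuousLinearMap.comp_apply, hΔ, hh, hx₀def]
    rw [hfix l hl, hfix l₀ hl₀, hDTapp] at h1
    have h2 : ‖Δ - B Δ - C h‖ ≤ ε₁ * (K + 1) * ‖h‖ := by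
      have e : g l - g l₀ - (B Δ + C h) = Δ - B Δ - C h := by rw [hΔ]; abel
      rw [e] at h1
      calc ‖Δ - B Δ - C h‖ ≤ ε₁ * (‖Δ‖ + ‖h‖) := h1
        _ ≤ ε₁ * ((K + 1) * ‖h‖) := by
            apply mul_le_mul_of_nonneg_left _ hε₁pos.le
            rw [add_mul, one_mul]
            exact add_le_add_left hlip _
        _ = ε₁ * (K + 1) * ‖h‖ := by ring
    have hJΔ : J (Δ - B Δ) = Δ := by
      have : Δ - B Δ = ((1 : X →L[ℝ] X) - B) Δ := by
        simp [ContinuousLinearMap.sub_apply]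
      rw [this, ← ContinuousLinearMap.comp_apply, hJcomp]
      simp
    have hkey : Δ - (J.comp C) h = J (Δ - B Δ - C h) := by
      rw [map_sub J (Δ - B Δ) (C h), hJΔ, ContinuousLinearMap.comp_apply]
    have h3 : ‖Δ - (J.comp C) h‖ ≤ ‖J‖ * (ε₁ * (K + 1) * ‖h‖) := by
      rw [hkey]
      calc ‖J (Δ - B Δ - C h)‖ ≤ ‖J‖ * ‖Δ - B Δ - C h‖ := J.le_opNorm _
        _ ≤ ‖J‖ * (ε₁ * (K + 1) * ‖h‖) :=
          mul_le_mul_of_nonneg_left h2 (norm_nonneg _)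
    have hfinal : ‖J‖ * (ε₁ * (K + 1) * ‖h‖) ≤ ε * ‖h‖ := by
      have hε₁le : ε₁ ≤ ε / ((‖J‖ + 1) * (K + 1)) := by
        rw [hε₁]; exact min_le_left _ _
      have hpos : (0:ℝ) < (‖J‖ + 1) * (K + 1) := by positivity
      have hbig : ε₁ * ((‖J‖ + 1) * (K + 1)) ≤ ε := by
        rw [← le_div_iff₀ hpos]; exact hε₁le
      have hstep : ‖J‖ * (ε₁ * (K + 1)) ≤ ε :=
        calc ‖J‖ * (ε₁ * (K + 1)) ≤ (‖J‖ + 1) * (ε₁ * (K + 1)) :=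
              mul_le_mul_of_nonneg_right (by linarith [norm_nonneg J])
                (mul_nonneg hε₁pos.le (by linarith))
          _ = ε₁ * ((‖J‖ + 1) * (K + 1)) := by ring
          _ ≤ ε := hbig
      calc ‖J‖ * (ε₁ * (K + 1) * ‖h‖) = ‖J‖ * (ε₁ * (K + 1)) * ‖h‖ := by ring
        _ ≤ ε * ‖h‖ := mul_le_mul_of_nonneg_right hstep (norm_nonneg _)
    calc ‖g l - g l₀ - (J.comp ((DT (g l₀) l₀).comp (ContinuousLinearMap.inr ℝ X Λ))) (l - l₀)‖
        = ‖Δ - (J.comp C) h‖ := by rw [hΔ, hh, hCdef, hx₀def]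
      _ ≤ ‖J‖ * (ε₁ * (K + 1) * ‖h‖) := h3
      _ ≤ ε * ‖h‖ := hfinal
      _ = ε * ‖l - l₀‖ := by rw [hh]
end
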